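/- arXiv:1506.05389 — 17 statements merged into one kernel-verified Lean document; each statement's English description precedes it below -/
import Mathlib

section
/- Let R be a subring of a commutative ring T with a common ideal C containing a T-regular element. If T is flat as an R-module, then the inclusion R → T is a flat epimorphism; that is, the multiplication map T ⊗_R T → T is bijective. -/
open TensorProduct

/-- If `T` is flat over `R`, then `R → T` is a flat epimorphism:
the multiplication map `T ⊗[R] T → T` is bijective. -/
theorem stmt_1 (T : Type*) [CommRing T] (R : Subring T) (C : Ideal T)
    (hCR : (C : Set T) ⊆ (R : Set T))
    (hreg : ∃ c ∈ C, c ∈ nonZeroDivisors T)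
    (hflat : Module.Flat ↥R T) :
    Function.Bijective (LinearMap.mul' ↥R T) := by
  obtain ⟨c, hcC, hc⟩ := hreg
  constructor
  · -- injectivity
    have hinj : Function.Injective (LinearMap.mulLeft ↥R c) := by
      intro a b hab
      simpa using mul_cancel_left_mem_nonZeroDivisors hc |>.mp hab
    have hrT : Function.Injective
        (LinearMap.rTensor T (LinearMap.mulLeft ↥R c)) :=
      Module.Flat.rTensor_preserves_injective_linearMap _ hinj
    have key : ∀ x : T ⊗[↥R] T,
        LinearMap.rTensor T (LinearMap.mulLeft ↥R c) x
          = (1 : T) ⊗ₜ[↥R] (c * LinearMap.mul' ↥R T x) := by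
      intro x
      induction x with
      | zero => simp
      | tmul t s =>
        have hct : c * t ∈ R := hCR (C.mul_mem_right t hcC)
        have : ((⟨c * t, hct⟩ : ↥R) : T) ⊗ₜ[↥R] s
            = (1 : T) ⊗ₜ[↥R] ((⟨c * t, hct⟩ : ↥R) • s) := by
          rw [← TensorProduct.smul_tmul]
          congr 1
          simp [Subring.smul_def]
        simp only [LinearMap.rTensor_tmul, LinearMap.mulLeft_apply,
          LinearMap.mul'_apply]
        rw [show c * t = ((⟨c * t, hct⟩ : ↥R) : T) from rfl, this]
        congr 1
        simp [Subring.smul_def, mul_assoc]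
      | add a b ha hb =>
        simp [ha, hb, TensorProduct.tmul_add, mul_add]
    rw [injective_iff_map_eq_zero]
    intro x hx
    apply hrT
    rw [key x, hx]
    simp
  · intro t
    exact ⟨t ⊗ₜ 1, by simp⟩
end

section
/- Let R be a subring of a commutative ring T with a common ideal C containing a T-regular element. If T is faithfully flat as an R-module, then T = R. -/
/-! If `c ∈ R` is `T`-regular and `c T ⊆ R`, then in `T ⊗[R] T` we have
`c • (x ⊗ y) = x ⊗ c y = (c y) x ⊗ 1 = c • (x y ⊗ 1)`, and multiplication by `c` is injective on
`T ⊗[R] T` because `T` is flat. So `t ↦ t ⊗ 1` maps `T` onto `T ⊗[R] T`, and surjectivity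
descends along the faithfully flat map `R → T`. -/

open TensorProduct

section

variable {A B : Type*} [CommRing A] [CommRing B] [Algebra A B]

theorem TensorProduct.tmul_eq_mul_tmul_one_of_smul_mem_range [Module.Flat A B] {c : A}
    (hc : IsSMulRegular B c) (hcond : ∀ y : B, c • y ∈ (algebraMap A B).range) (x y : B) :
    x ⊗ₜ[A] y = (x * y) ⊗ₜ[A] (1 : B) := by
  apply hc.lTensor B
  show c • x ⊗ₜ[A] y = c • (x * y) ⊗ₜ[A] (1 : B)
  rw [← tmul_smul, ← tmul_smul]
  obtain ⟨a, ha⟩ := hcond y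
  calc x ⊗ₜ[A] (c • y) = x ⊗ₜ[A] (a • (1 : B)) := by
        rw [← ha, Algebra.algebraMap_eq_smul_one]
    _ = (a • x) ⊗ₜ[A] (1 : B) := (smul_tmul a x 1).symm
    _ = (c • (x * y)) ⊗ₜ[A] (1 : B) := by
        rw [_root_.Algebra.smul_def, ha, smul_mul_assoc, mul_comm]
    _ = (x * y) ⊗ₜ[A] (c • (1 : B)) := smul_tmul c (x * y) 1

theorem Algebra.TensorProduct.algebraMap_surjective_of_smul_mem_range [Module.Flat A B] {c : A}
    (hc : IsSMulRegular B c) (hcond : ∀ y : B, c • y ∈ (algebraMap A B).range) :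
    Function.Surjective (algebraMap B (B ⊗[A] B)) := by
  intro z
  induction z using TensorProduct.induction_on with
  | zero => exact ⟨0, map_zero _⟩
  | tmul x y =>
    exact ⟨x * y, by rw [tmul_eq_mul_tmul_one_of_smul_mem_range hc hcond]; rfl⟩
  | add z w hz hw =>
    obtain ⟨x, rfl⟩ := hz
    obtain ⟨y, rfl⟩ := hw
    exact ⟨x + y, map_add _ x y⟩

theorem Algebra.algebraMap_surjective_of_faithfullyFlat_of_smul_mem_range
    [Module.FaithfullyFlat A B] {c : A}
    (hc : IsSMulRegular B c) (hcond : ∀ y : B, c • y ∈ (algebraMap A B).range) :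
    Function.Surjective (algebraMap A B) :=
  Module.FaithfullyFlat.surjective_of_tensorProduct
    (Algebra.TensorProduct.algebraMap_surjective_of_smul_mem_range hc hcond)

end

/-- If `T` is faithfully flat over `R`, then `T = R`. -/
theorem stmt_2 (T : Type*) [CommRing T] (R : Subring T) (C : Ideal T)
    (hCR : (C : Set T) ⊆ (R : Set T))
    (hreg : ∃ c ∈ C, c ∈ nonZeroDivisors T)
    (hff : Module.FaithfullyFlat ↥R T) :
    R = ⊤ := by
  obtain ⟨c, hcC, hcreg⟩ := hreg
  let c' : R := ⟨c, hCR hcC⟩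
  have hc : IsSMulRegular T c' :=
    (isSMulRegular_algebraMap_iff T).mp (isRegular_iff_mem_nonZeroDivisors.mpr hcreg).left
  have hcond : ∀ y : T, c' • y ∈ (algebraMap R T).range := fun y =>
    ⟨⟨c * y, hCR (C.mul_mem_right y hcC)⟩, rfl⟩
  have hsurj := Algebra.algebraMap_surjective_of_faithfullyFlat_of_smul_mem_range hc hcond
  exact (Subring.eq_top_iff' R).mpr fun t => by
    obtain ⟨r, rfl⟩ := hsurj t
    exact r.2
end

section
/- Let R be a subring of a commutative ring T with a common ideal C containing a T-regular element, and assume T is flat over R and C is a principal ideal of T. Let I be an ideal of R with IT = T. Then C ⊆ I and IC = C. -/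
namespace Subring

variable {T : Type*} [CommRing T] {R : Subring T} {C : Ideal T}

/-- If `t = ∑ aᵢ tᵢ` with `aᵢ ∈ I`, then `t x = ∑ aᵢ (tᵢ x)` and each `tᵢ x` lies in `C ⊆ R`. -/
theorem exists_mem_mul_comap_coe_eq_mul (hCR : (C : Set T) ⊆ R) {I : Ideal R} {t : T}
    (ht : t ∈ I.map (algebraMap R T)) {x : R} (hx : (x : T) ∈ C) :
    ∃ y ∈ I * C.comap (algebraMap R T), (y : T) = t * x := by
  induction ht using Submodule.span_induction generalizing x with
  | mem _ h =>
    obtain ⟨a, ha, rfl⟩ := h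
    exact ⟨a * x, Ideal.mul_mem_mul ha hx, rfl⟩
  | zero => exact ⟨0, zero_mem _, by simp⟩
  | add t₁ t₂ _ _ h₁ h₂ =>
    obtain ⟨y₁, hy₁, e₁⟩ := h₁ hx
    obtain ⟨y₂, hy₂, e₂⟩ := h₂ hx
    exact ⟨y₁ + y₂, add_mem hy₁ hy₂, by push_cast [e₁, e₂]; ring⟩
  | smul r t _ h =>
    obtain ⟨y, hy, e⟩ := h (x := ⟨r * x, hCR (C.mul_mem_left r hx)⟩) (C.mul_mem_left r hx)
    exact ⟨y, hy, by rw [e, smul_eq_mul]; ring⟩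

variable (hCR : (C : Set T) ⊆ R) {I : Ideal R} (hIT : I.map (algebraMap R T) = ⊤)
include hCR hIT

theorem comap_le_mul_comap_of_map_eq_top :
    C.comap (algebraMap R T) ≤ I * C.comap (algebraMap R T) := by
  intro x hx
  obtain ⟨y, hy, e⟩ := exists_mem_mul_comap_coe_eq_mul hCR (hIT ▸ Submodule.mem_top) hx
  rwa [Subtype.ext (e.trans (one_mul _))] at hy

theorem mul_comap_eq_of_map_eq_top :
    I * C.comap (algebraMap R T) = C.comap (algebraMap R T) :=
  le_antisymm Ideal.mul_le_right (comap_le_mul_comap_of_map_eq_top hCR hIT)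

theorem comap_le_of_map_eq_top : C.comap (algebraMap R T) ≤ I :=
  mul_comap_eq_of_map_eq_top hCR hIT ▸ Ideal.mul_le_left

end Subring

theorem stmt_3_general (T : Type*) [CommRing T] (R : Subring T) (C : Ideal T)
    (hCR : (C : Set T) ⊆ (R : Set T))
    (I : Ideal ↥R) (hIT : Ideal.map (algebraMap ↥R T) I = ⊤) :
    Ideal.comap (algebraMap ↥R T) C ≤ I ∧
      I * Ideal.comap (algebraMap ↥R T) C = Ideal.comap (algebraMap ↥R T) C :=
  ⟨Subring.comap_le_of_map_eq_top hCR hIT, Subring.mul_comap_eq_of_map_eq_top hCR hIT⟩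

/-- condition (FP), and `I` an ideal of `R` with `IT = T`.
Then `C ⊆ I` and `IC = C` (viewing `C` as the ideal of `R` it determines). -/
theorem stmt_3 (T : Type*) [CommRing T] (R : Subring T) (C : Ideal T)
    (hCR : (C : Set T) ⊆ (R : Set T))
    (hreg : ∃ c ∈ C, c ∈ nonZeroDivisors T)
    (hflat : Module.Flat ↥R T) (hprin : C.IsPrincipal)
    (I : Ideal ↥R) (hIT : Ideal.map (algebraMap ↥R T) I = ⊤) :
    Ideal.comap (algebraMap ↥R T) C ≤ I ∧
      I * Ideal.comap (algebraMap ↥R T) C = Ideal.comap (algebraMap ↥R T) C :=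
  stmt_3_general T R C hCR I hIT
end

section
/- Let R be a subring of a commutative ring T with a common ideal C containing a T-regular element, and assume T is flat over R and C is a principal ideal of T. Then for every ideal I of R, the natural multiplication map C ⊗_R I → I is injective. -/
/-!
Since `C ⊆ R`, the ideal `C ∩ R` of `R` is just `C` viewed as an `R`-module. A generator `g` of
`C` divides the regular element `c`, so it is regular itself and `t ↦ g t` is an isomorphism
`T ≅ C` of `R`-modules; hence `C` is flat over `R`, and tensoring the inclusion `I → R` with it
stays injective.
-/

theorem mem_nonZeroDivisors_of_dvd {M₀ : Type*} [CommMonoidWithZero M₀] {a b : M₀}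
    (h : a ∣ b) (hb : b ∈ nonZeroDivisors M₀) : a ∈ nonZeroDivisors M₀ := by
  obtain ⟨c, rfl⟩ := h
  exact (mul_mem_nonZeroDivisors.mp hb).1

namespace Ideal

variable {R T : Type*} [CommRing R] [CommRing T] [Algebra R T]

theorem range_mulLeft_span_singleton (g : T) :
    LinearMap.range (LinearMap.mulLeft R g) = (span {g} : Ideal T).restrictScalars R := by
  ext x
  simp [mem_span_singleton', mul_comm, eq_comm]

theorem flat_restrictScalars_of_isPrincipal [Module.Flat R T] {C : Ideal T}
    (hprin : C.IsPrincipal) (hreg : ∃ c ∈ C, c ∈ nonZeroDivisors T) :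
    Module.Flat R (C.restrictScalars R) := by
  obtain ⟨g, rfl⟩ := hprin
  obtain ⟨c, hc, hcreg⟩ := hreg
  have hg : g ∈ nonZeroDivisors T :=
    mem_nonZeroDivisors_of_dvd (mem_span_singleton.mp hc) hcreg
  have hinj : Function.Injective (LinearMap.mulLeft R g) := fun x y hxy =>
    (mul_cancel_left_mem_nonZeroDivisors hg).mp hxy
  exact Module.Flat.of_linearEquiv <| ((LinearEquiv.ofInjective _ hinj).trans
    (LinearEquiv.ofEq _ _ (range_mulLeft_span_singleton g))).symm

theorem map_comap_algebraMap_eq_restrictScalars {C : Ideal T}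
    (hC : (C : Set T) ⊆ Set.range (algebraMap R T)) :
    Submodule.map (Algebra.linearMap R T) (C.comap (algebraMap R T)) = C.restrictScalars R := by
  ext x
  constructor
  · rintro ⟨r, hr, rfl⟩
    exact hr
  · intro hx
    obtain ⟨r, rfl⟩ := hC hx
    exact ⟨r, hx, rfl⟩

theorem flat_comap_algebraMap_of_isPrincipal [Module.Flat R T] {C : Ideal T}
    (hinj : Function.Injective (algebraMap R T))
    (hC : (C : Set T) ⊆ Set.range (algebraMap R T))
    (hprin : C.IsPrincipal) (hreg : ∃ c ∈ C, c ∈ nonZeroDivisors T) :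
    Module.Flat R (C.comap (algebraMap R T)) :=
  have := flat_restrictScalars_of_isPrincipal (R := R) hprin hreg
  Module.Flat.of_linearEquiv <|
    (Submodule.equivMapOfInjective (Algebra.linearMap R T) hinj (C.comap (algebraMap R T))).trans
      (LinearEquiv.ofEq _ _ (map_comap_algebraMap_eq_restrictScalars hC))

theorem mulMap_injective_of_flat_left (M N : Ideal R) [Module.Flat R M] :
    Function.Injective (Submodule.mulMap M N) :=
  (Submodule.LinearDisjoint.of_right_le_one_of_flat M N (one_eq_top (R := R) ▸ le_top)).injective

end Ideal

/-- condition (FP). For every ideal `I` of `R`, the natural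
multiplication map `C ⊗[R] I → I` (landing in `R`), `x ⊗ i ↦ x * i`, is injective. -/
theorem stmt_4 (T : Type*) [CommRing T] (R : Subring T) (C : Ideal T)
    (hCR : (C : Set T) ⊆ (R : Set T))
    (hreg : ∃ c ∈ C, c ∈ nonZeroDivisors T)
    (hflat : Module.Flat ↥R T) (hprin : C.IsPrincipal)
    (I : Ideal ↥R) :
    Function.Injective
      (Submodule.mulMap (Ideal.comap (algebraMap ↥R T) C) I) := by
  have : Module.Flat R (C.comap (algebraMap R T)) :=
    Ideal.flat_comap_algebraMap_of_isPrincipal Subtype.val_injective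
      (fun x hx => ⟨⟨x, hCR hx⟩, rfl⟩) hprin hreg
  exact Ideal.mulMap_injective_of_flat_left _ I
end

section
/- Let R be a subring of a commutative ring T with a common ideal C containing a T-regular element, with T flat over R and C principal as an ideal of T. Then for every ideal I of R, Tor_1^R(R/C, I) = 0. -/
/-!
Write `C = tT`. Since `t` is a non-zero-divisor and `C ⊆ R`, multiplication by `t` identifies
`T` with the ideal `J = C ∩ R` of `R`, so `J` is a flat `R`-module. For a flat ideal `J`, the map
`J ⊗ I → R ⊗ I` is injective, and this kernel is exactly what obstructs `Tor₁(R/J, I)`: a diagram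
chase through a projective resolution `P₂ → P₁ → P₀ → I` shows that `R/J ⊗ P₂ → R/J ⊗ P₁ → R/J ⊗ P₀`
stays exact in the middle.
-/

open LinearMap TensorProduct CategoryTheory

section TensorExactness

variable {R A B Q K M N : Type*} [CommRing R] [AddCommGroup A] [Module R A]
  [AddCommGroup B] [Module R B] [AddCommGroup Q] [Module R Q] [AddCommGroup K] [Module R K]
  [AddCommGroup M] [Module R M] [AddCommGroup N] [Module R N]

theorem Module.Flat.rTensor_subtype_injective [Module.Flat R N] (p : Submodule R M)
    (q : Submodule R N) [Module.Flat R p] : Function.Injective (p.subtype.rTensor q) := by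
  have h := Module.Flat.tensorProduct_mapIncl_injective_of_left p q
  rw [mapIncl, ← lTensor_comp_rTensor, coe_comp] at h
  exact h.of_comp

theorem LinearMap.rTensor_lTensor_comm_apply (u : A →ₗ[R] B) (v : K →ₗ[R] M) (z : A ⊗[R] K) :
    u.rTensor M (v.lTensor A z) = v.lTensor B (u.rTensor K z) := by
  rw [← comp_apply, ← comp_apply, rTensor_comp_lTensor, lTensor_comp_rTensor]

/-- With `Q = B/A` and `B` flat, `ker (A ⊗ N → B ⊗ N)` is `Tor₁(Q, N)`, and this is the piece
`Tor₁(Q, N) → Q ⊗ K → Q ⊗ M` of the long exact sequence of `0 → K → M → N → 0`. -/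
theorem LinearMap.lTensor_injective_of_rTensor_injective [Module.Flat R B]
    {i : A →ₗ[R] B} {p : B →ₗ[R] Q} (hip : Function.Exact i p) (hp : Function.Surjective p)
    {f : K →ₗ[R] M} {g : M →ₗ[R] N} (hf : Function.Injective f) (hfg : Function.Exact f g)
    (hg : Function.Surjective g) (hi : Function.Injective (i.rTensor N)) :
    Function.Injective (f.lTensor Q) := by
  rw [injective_iff_map_eq_zero]
  intro x hx
  obtain ⟨y, rfl⟩ := rTensor_surjective K hp x
  obtain ⟨u, hu⟩ := (rTensor_exact M hip hp (f.lTensor B y)).mp <| by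
    rw [rTensor_lTensor_comm_apply, hx]
  obtain ⟨v, rfl⟩ := (lTensor_exact A hfg hg u).mp <| hi <| by
    rw [map_zero, rTensor_lTensor_comm_apply, hu, ← comp_apply, ← lTensor_comp,
      hfg.linearMap_comp_eq_zero, lTensor_zero, zero_apply]
  have hy : i.rTensor K v = y :=
    Module.Flat.lTensor_preserves_injective_linearMap f hf <| by
      rw [← rTensor_lTensor_comm_apply, hu]
  rw [← hy]
  exact (rTensor_exact K hip hp).apply_apply_eq_zero v

theorem Function.Exact.lTensor_of_lTensor_range_injective {f : K →ₗ[R] M} {g : M →ₗ[R] N}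
    (hfg : Function.Exact f g) (h : Function.Injective ((range g).subtype.lTensor Q)) :
    Function.Exact (f.lTensor Q) (g.lTensor Q) := by
  have hfg' : Function.Exact f g.rangeRestrict :=
    (Injective.comp_exact_iff_exact (range g).injective_subtype).mp hfg
  rw [← g.subtype_comp_codRestrict (range g) (mem_range_self g), lTensor_comp,
    Injective.comp_exact_iff_exact h]
  exact lTensor_exact Q hfg' g.surjective_rangeRestrict

end TensorExactness

theorem ModuleCat.subsingleton_tor_one_of_exact {R : Type*} [CommRing R] {A X : ModuleCat R}
    (P : ProjectiveResolution X)
    (h : Function.Exact ((P.complex.d 2 1).hom.lTensor A) ((P.complex.d 1 0).hom.lTensor A)) :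
    Subsingleton (((Tor (ModuleCat R) 1).obj A).obj X) := by
  rw [← ModuleCat.isZero_iff_subsingleton]
  refine .of_iso ((HomologicalComplex.exactAt_iff_isZero_homology _ 1).mp ?_)
    (P.isoLeftDerivedObj _ 1)
  rw [HomologicalComplex.exactAt_iff' _ 2 1 0 (by simp) (by simp),
    ShortComplex.ShortExact.moduleCat_exact_iff_function_exact]
  exact h

theorem Ideal.subsingleton_tor_one_quotient_of_flat {R : Type*} [CommRing R] (J I : Ideal R)
    [Module.Flat R J] :
    Subsingleton (((Tor (ModuleCat R) 1).obj (ModuleCat.of R (R ⧸ J))).obj (ModuleCat.of R I)) := by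
  obtain ⟨P⟩ := HasProjectiveResolution.out (Z := ModuleCat.of R I)
  let ε : P.complex.X 0 →ₗ[R] I := (P.π.f 0).hom
  have hε : Function.Exact (range (P.complex.d 1 0).hom).subtype ε := by
    rw [LinearMap.exact_iff, Submodule.range_subtype]
    exact ((ShortComplex.moduleCat_exact_iff_range_eq_ker _).mp P.exact₀).symm
  have hε_surj : Function.Surjective ε :=
    (ModuleCat.epi_iff_surjective (P.π.f 0)).mp inferInstance
  refine ModuleCat.subsingleton_tor_one_of_exact P ?_
  refine Function.Exact.lTensor_of_lTensor_range_injective ?_ ?_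
  · exact (ShortComplex.ShortExact.moduleCat_exact_iff_function_exact _).mp (P.exact_succ 0)
  · exact lTensor_injective_of_rTensor_injective (LinearMap.exact_subtype_mkQ J)
      J.mkQ_surjective (range _).injective_subtype hε hε_surj
      (Module.Flat.rTensor_subtype_injective J I)

open Submodule.IsPrincipal

theorem Ideal.IsPrincipal.generator_mem_nonZeroDivisors {T : Type*} [CommRing T] {C : Ideal T}
    [C.IsPrincipal] {c : T} (hc : c ∈ C) (hreg : c ∈ nonZeroDivisors T) :
    generator C ∈ nonZeroDivisors T := by
  obtain ⟨s, rfl⟩ := (mem_iff_eq_smul_generator C).mp hc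
  exact (mul_mem_nonZeroDivisors.mp hreg).2

noncomputable def Subring.comapEquivOfIsPrincipal {T : Type*} [CommRing T] (R : Subring T)
    (C : Ideal T) [C.IsPrincipal] (hCR : (C : Set T) ⊆ R)
    (hreg : generator C ∈ nonZeroDivisors T) :
    T ≃ₗ[R] C.comap (algebraMap R T) :=
  LinearEquiv.ofBijective
    { toFun s := ⟨⟨generator C * s, hCR (C.mul_mem_right s (generator_mem C))⟩,
        C.mul_mem_right s (generator_mem C)⟩
      map_add' a b := by ext; exact mul_add _ _ _
      map_smul' r a := by ext; exact mul_left_comm _ _ _ }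
    ⟨fun a b h => (mul_cancel_left_mem_nonZeroDivisors hreg).mp
        (congrArg (fun x : C.comap _ => (x : T)) h), by
      rintro ⟨⟨x, _⟩, hx⟩
      obtain ⟨s, rfl⟩ := (mem_iff_eq_smul_generator C).mp hx
      exact ⟨s, by ext; exact mul_comm _ _⟩⟩

/-- condition (FP). For every ideal `I` of `R`,
`Tor_1^R(R/C, I) = 0`. -/
theorem stmt_5 (T : Type*) [CommRing T] (R : Subring T) (C : Ideal T)
    (hCR : (C : Set T) ⊆ (R : Set T))
    (hreg : ∃ c ∈ C, c ∈ nonZeroDivisors T)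
    (hflat : Module.Flat ↥R T) (hprin : C.IsPrincipal)
    (I : Ideal ↥R) :
    Subsingleton
      (((Tor (ModuleCat ↥R) 1).obj
          (ModuleCat.of ↥R (↥R ⧸ Ideal.comap (algebraMap ↥R T) C))).obj
        (ModuleCat.of ↥R I)) := by
  obtain ⟨c, hcC, hc⟩ := hreg
  have : Module.Flat R (C.comap (algebraMap R T)) := .of_linearEquiv
    (R.comapEquivOfIsPrincipal C hCR (Ideal.IsPrincipal.generator_mem_nonZeroDivisors hcC hc)).symm
  exact Ideal.subsingleton_tor_one_quotient_of_flat _ I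
end

section
/- Let R be a subring of a commutative ring T with a common ideal C containing a T-regular element, with T flat over R and C principal over T. If I is an ideal of R with IT = T, then the natural map C → C·Hom_R(I, R), sending x to multiplication-by-x, is an isomorphism of R-modules. -/
set_option synthInstance.maxHeartbeats 1000000

/-- A representation of `1 ∈ T` as a `T`-combination of elements of `I`. -/
theorem stmt_7_rep (T : Type*) [CommRing T] (R : Subring T) (I : Ideal ↥R)
    (hIT : Ideal.map (algebraMap ↥R T) I = ⊤) :
    ∃ (σ : Finset T) (s : T → T) (a : T → I),
      ∑ z ∈ σ, s z * ((a z : ↥R) : T) = 1 := by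
  have h1 : (1 : T) ∈ Ideal.map (algebraMap ↥R T) I := by rw [hIT]; trivial
  rw [Ideal.map, Ideal.span] at h1
  obtain ⟨cf, hsupp, hsum⟩ := Submodule.mem_span_set.mp h1
  have hch : ∀ z ∈ cf.support, ∃ a : I, ((a : ↥R) : T) = z := by
    intro z hz
    obtain ⟨x, hx, hx'⟩ := hsupp hz
    exact ⟨⟨x, hx⟩, hx'⟩
  choose! a ha using hch
  refine ⟨cf.support, cf, a, ?_⟩
  rw [← hsum, Finsupp.sum]
  exact Finset.sum_congr rfl fun z hz => by rw [ha z hz, smul_eq_mul]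

/-- Key lemma: if `IT = T`, then every `f : I →ₗ[R] R` is, after passing to `T`,
multiplication by some `t : T`. -/
theorem stmt_7_key (T : Type*) [CommRing T] (R : Subring T) (I : Ideal ↥R)
    (hIT : Ideal.map (algebraMap ↥R T) I = ⊤) (f : I →ₗ[↥R] ↥R) :
    ∃ t : T, ∀ i : I, ((f i : ↥R) : T) = t * (((i : ↥R) : T)) := by
  obtain ⟨σ, s, a, hrep⟩ := stmt_7_rep T R I hIT
  refine ⟨∑ z ∈ σ, s z * ((f (a z) : ↥R) : T), fun i => ?_⟩
  have haux : ∀ p q : I, ((f p : ↥R) : T) * ((q : ↥R) : T)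
      = ((p : ↥R) : T) * ((f q : ↥R) : T) := by
    intro p q
    have h1 : (q : ↥R) • p = (p : ↥R) • q := by
      apply Subtype.ext
      simp [mul_comm]
    have h2 : (q : ↥R) * f p = (p : ↥R) * f q := by
      have := congrArg f h1
      simpa [smul_eq_mul] using this
    have := congrArg (Subtype.val : ↥R → T) h2
    push_cast at this
    exact (mul_comm _ _).trans this
  calc ((f i : ↥R) : T) = (∑ z ∈ σ, s z * ((a z : ↥R) : T)) * ((f i : ↥R) : T) := by
        rw [hrep, one_mul]
    _ = ∑ z ∈ σ, s z * (((a z : ↥R) : T) * ((f i : ↥R) : T)) := by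
        rw [Finset.sum_mul]
        exact Finset.sum_congr rfl fun z _ => by ring
    _ = ∑ z ∈ σ, s z * (((f (a z) : ↥R) : T) * ((i : ↥R) : T)) := by
        exact Finset.sum_congr rfl fun z _ => by rw [haux (a z) i]
    _ = (∑ z ∈ σ, s z * ((f (a z) : ↥R) : T)) * ((i : ↥R) : T) := by
        rw [Finset.sum_mul]
        exact Finset.sum_congr rfl fun z _ => by ring

/-- condition (FP); `I` an ideal of `R` with `IT = T`.  The natural map
`C → C·Hom_R(I,R)`, `x ↦ λ_x` (multiplication by `x`), is an isomorphism: it is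
injective, and its range is exactly the submodule `C·Hom_R(I,R)`. -/
theorem stmt_7 (T : Type*) [CommRing T] (R : Subring T) (C : Ideal T)
    (hCR : (C : Set T) ⊆ (R : Set T))
    (hreg : ∃ c ∈ C, c ∈ nonZeroDivisors T)
    (hflat : Module.Flat ↥R T) (hprin : C.IsPrincipal)
    (I : Ideal ↥R) (hIT : Ideal.map (algebraMap ↥R T) I = ⊤) :
    Function.Injective
      (fun x : Ideal.comap (algebraMap ↥R T) C =>
        ((x : ↥R) • Submodule.subtype I : I →ₗ[↥R] ↥R)) ∧
    Set.range
      (fun x : Ideal.comap (algebraMap ↥R T) C =>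
        ((x : ↥R) • Submodule.subtype I : I →ₗ[↥R] ↥R)) =
      ↑((Ideal.comap (algebraMap ↥R T) C) •
          (⊤ : Submodule ↥R (I →ₗ[↥R] ↥R))) := by
  constructor
  · -- injectivity
    intro x y h
    simp only at h
    have h' : ∀ i : I, (x : ↥R) * (i : ↥R) = (y : ↥R) * (i : ↥R) := by
      intro i
      have := DFunLike.congr_fun h i
      simpa [smul_eq_mul] using this
    obtain ⟨σ, s, a, hrep⟩ := stmt_7_rep T R I hIT
    have key : ((x : ↥R) : T) = ((y : ↥R) : T) := by
      have hz : ∀ z, ((x : ↥R) : T) * ((a z : ↥R) : T)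
          = ((y : ↥R) : T) * ((a z : ↥R) : T) := by
        intro z
        have := congrArg (Subtype.val : ↥R → T) (h' (a z))
        push_cast at this
        exact this
      calc ((x : ↥R) : T)
          = ((x : ↥R) : T) * (∑ z ∈ σ, s z * ((a z : ↥R) : T)) := by
            rw [hrep, mul_one]
        _ = ∑ z ∈ σ, s z * (((x : ↥R) : T) * ((a z : ↥R) : T)) := by
            rw [Finset.mul_sum]
            exact Finset.sum_congr rfl fun z _ => by ring
        _ = ∑ z ∈ σ, s z * (((y : ↥R) : T) * ((a z : ↥R) : T)) := by
            exact Finset.sum_congr rfl fun z _ => by rw [hz z]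
        _ = ((y : ↥R) : T) * (∑ z ∈ σ, s z * ((a z : ↥R) : T)) := by
            rw [Finset.mul_sum]
            exact Finset.sum_congr rfl fun z _ => by ring
        _ = ((y : ↥R) : T) := by rw [hrep, mul_one]
    exact Subtype.ext (Subtype.ext key)
  · -- range description
    ext φ
    simp only [Set.mem_range, SetLike.mem_coe]
    constructor
    · rintro ⟨x, rfl⟩
      exact Submodule.smul_mem_smul x.2 trivial
    · intro hφ
      refine Submodule.smul_induction_on hφ ?_ ?_
      · intro r hr m _
        obtain ⟨t, ht⟩ := stmt_7_key T R I hIT m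
        have hrC : ((r : ↥R) : T) ∈ C := hr
        have hrtC : ((r : ↥R) : T) * t ∈ C := C.mul_mem_right t hrC
        refine ⟨⟨⟨((r : ↥R) : T) * t, hCR hrtC⟩, hrtC⟩, ?_⟩
        apply LinearMap.ext
        intro i
        apply Subtype.ext
        show (((r : ↥R) : T) * t) * ((i : ↥R) : T) = (((r : ↥R) • m i : ↥R) : T)
        rw [smul_eq_mul]
        push_cast
        rw [ht i]
        ring
      · rintro φ₁ φ₂ ⟨x₁, rfl⟩ ⟨x₂, rfl⟩
        exact ⟨x₁ + x₂, by simp [add_smul]⟩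
end

section
/- Let R be a subring of a commutative ring T with a common ideal C containing a T-regular element, with T flat over R and C principal over T. If I is an ideal of R with IT = T, then Hom_R(I, R)/(C·Hom_R(I, R)) ≅ Hom_{R/C}(I/CI, R/C) as R/C-modules. -/
/-!
Because `IT = T`, write `1 = ∑ tᵢ aᵢ` with `aᵢ ∈ I`; from `f(aᵢ) x = aᵢ f(x)` every `R`-linear map `f`
from `I` to a `T`-module is multiplication by `u = ∑ tᵢ f(aᵢ)`. Reduction modulo `J = C ∩ R` maps
`Hom_R(I, R)` onto `Hom_R(I/JI, R/J)` with kernel `J · Hom_R(I, R)`: if `f` takes values in `C`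
then so does `u`, and `u ∈ C ⊆ R`; a map `g : I → R/J`, read in `T/C`, is multiplication by some
`u ∈ T`, and `uI ⊆ R + C = R`, so `x ↦ ux` lifts `g`.
-/

namespace Ideal

section Extension

variable {R T N : Type*} [CommRing R] [CommRing T] [Algebra R T]
  [AddCommGroup N] [Module R N] [Module T N] [IsScalarTower R T N]

/-- The `t` admitting `u` with `t • f x = x • u` for all `x` form an ideal of `T` containing the
image of `I` (take `u = f a`), hence all of `IT = T`. -/
theorem exists_forall_eq_smul_of_map_eq_top {I : Ideal R} (hI : I.map (algebraMap R T) = ⊤)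
    (f : I →ₗ[R] N) :
    ∃ u ∈ Submodule.span T (Set.range f), ∀ x : I, f x = (x : R) • u := by
  have h1 : (1 : T) ∈ I.map (algebraMap R T) := hI ▸ Submodule.mem_top
  obtain ⟨u, hu, hfu⟩ : ∃ u ∈ Submodule.span T (Set.range f),
      ∀ x : I, (1 : T) • f x = (x : R) • u := by
    refine Submodule.span_induction (p := fun t _ => ∃ u ∈ Submodule.span T (Set.range f),
      ∀ x : I, t • f x = (x : R) • u) ?_ ?_ ?_ ?_ h1
    · rintro _ ⟨a, ha, rfl⟩
      refine ⟨f ⟨a, ha⟩, Submodule.subset_span ⟨_, rfl⟩, fun x => ?_⟩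
      rw [algebraMap_smul, ← map_smul, ← map_smul]
      congr 1
      exact Subtype.ext (mul_comm _ _)
    · exact ⟨0, zero_mem _, fun x => by simp⟩
    · rintro s t - - ⟨u, hu, hsu⟩ ⟨v, hv, htv⟩
      exact ⟨u + v, add_mem hu hv, fun x => by rw [add_smul, hsu, htv, smul_add]⟩
    · rintro s t - ⟨u, hu, htu⟩
      exact ⟨s • u, Submodule.smul_mem _ s hu, fun x => by rw [smul_assoc, htu, smul_comm]⟩
  exact ⟨u, hu, fun x => by rw [← hfu, one_smul]⟩

end Extension

variable {R M : Type*} [CommRing R] [AddCommGroup M] [Module R M]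

def reduceLinearForm (J : Ideal R) :
    (M →ₗ[R] R) →ₗ[R] (M ⧸ (J • ⊤ : Submodule R M)) →ₗ[R] (R ⧸ J) :=
  Submodule.mapQLinear _ _ ∘ₗ LinearMap.id.codRestrict _ fun f =>
    Submodule.smul_le.mpr fun r hr m _ => by
      simpa only [Submodule.mem_comap, map_smul, smul_eq_mul] using J.mul_mem_right _ hr

@[simp]
theorem reduceLinearForm_apply_mk (J : Ideal R) (f : M →ₗ[R] R) (x : M) :
    J.reduceLinearForm f (Submodule.Quotient.mk x) = Submodule.Quotient.mk (f x) :=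
  rfl

theorem smul_top_le_ker_reduceLinearForm (J : Ideal R) :
    J • (⊤ : Submodule R (M →ₗ[R] R)) ≤ LinearMap.ker J.reduceLinearForm := by
  refine Submodule.smul_le.mpr fun r hr f _ => LinearMap.mem_ker.mpr ?_
  refine Submodule.linearMap_qext _ (LinearMap.ext fun x => ?_)
  change J.reduceLinearForm (r • f) (Submodule.Quotient.mk x) = 0
  rw [map_smul, LinearMap.smul_apply, reduceLinearForm_apply_mk, ← Submodule.Quotient.mk_smul,
    Submodule.Quotient.mk_eq_zero]
  exact J.mul_mem_right _ hr

end Ideal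

section Subring

variable {T : Type*} [CommRing T] {R : Subring T} {C : Ideal T} {I : Ideal R}

open Ideal

theorem ker_reduceLinearForm_eq (hCR : (C : Set T) ⊆ R) (hIT : I.map (algebraMap R T) = ⊤) :
    LinearMap.ker ((C.comap (algebraMap R T)).reduceLinearForm (M := I)) =
      C.comap (algebraMap R T) • ⊤ := by
  refine le_antisymm (fun f hf => ?_) (smul_top_le_ker_reduceLinearForm _)
  have hfC : ∀ x : I, ((f x : R) : T) ∈ C := fun x => by
    have := LinearMap.congr_fun (LinearMap.mem_ker.mp hf) (Submodule.Quotient.mk x)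
    rwa [reduceLinearForm_apply_mk, LinearMap.zero_apply, Submodule.Quotient.mk_eq_zero] at this
  obtain ⟨u, hu, hfu⟩ := exists_forall_eq_smul_of_map_eq_top hIT (Algebra.linearMap R T ∘ₗ f)
  have huC : u ∈ C := Submodule.span_le.mpr (by rintro _ ⟨x, rfl⟩; exact hfC x) hu
  have hf : f = (⟨u, hCR huC⟩ : R) • I.subtype :=
    LinearMap.ext fun x => Subtype.ext <| by
      simpa [Algebra.smul_def, Algebra.algebraMap_ofSubsemiring_apply, mul_comm] using hfu x
  rw [hf]
  exact Submodule.smul_mem_smul huC Submodule.mem_top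

theorem reduceLinearForm_surjective (hCR : (C : Set T) ⊆ R)
    (hIT : I.map (algebraMap R T) = ⊤) :
    Function.Surjective ((C.comap (algebraMap R T)).reduceLinearForm (M := I)) := by
  intro g
  let J := C.comap (algebraMap R T)
  let q : R ⧸ J →ₗ[R] T ⧸ C := (quotientMapₐ C (Algebra.ofId R T) le_rfl).toLinearMap
  obtain ⟨v, -, hv⟩ :=
    exists_forall_eq_smul_of_map_eq_top hIT (q ∘ₗ g ∘ₗ (J • ⊤ : Submodule R I).mkQ)
  obtain ⟨u, rfl⟩ := Ideal.Quotient.mk_surjective v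
  have hlift : ∀ (x : I) (r : R), Submodule.Quotient.mk r = g (Submodule.Quotient.mk x) →
      (x : T) * u - r ∈ C := by
    intro x r hr
    have := hv x
    simp only [LinearMap.comp_apply, Submodule.mkQ_apply, ← hr] at this
    have hq : q (Submodule.Quotient.mk r) = Ideal.Quotient.mk C (r : T) := rfl
    have hsmul : (x : R) • Ideal.Quotient.mk C u = Ideal.Quotient.mk C ((x : T) * u) := by
      rw [Algebra.smul_def, ← Ideal.Quotient.mk_algebraMap, ← map_mul]; rfl
    rw [hq, hsmul] at this
    exact Ideal.Quotient.eq.mp this.symm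
  have hmem : ∀ x : I, (x : T) * u ∈ R := fun x => by
    obtain ⟨r, hr⟩ := Submodule.Quotient.mk_surjective _ (g (Submodule.Quotient.mk x))
    simpa using add_mem (hCR (hlift x r hr)) r.2
  let f : I →ₗ[R] R :=
    { toFun x := ⟨x * u, hmem x⟩
      map_add' x y := Subtype.ext (by push_cast; ring)
      map_smul' r x := Subtype.ext (by simp [mul_assoc]) }
  refine ⟨f, Submodule.linearMap_qext _ (LinearMap.ext fun x => ?_)⟩
  obtain ⟨r, hr⟩ := Submodule.Quotient.mk_surjective _ (g (Submodule.Quotient.mk x))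
  change Submodule.Quotient.mk (f x) = g (Submodule.Quotient.mk x)
  rw [← hr, Submodule.Quotient.eq]
  exact hlift x r hr

end Subring

theorem stmt_8_general (T : Type*) [CommRing T] (R : Subring T) (C : Ideal T)
    (hCR : (C : Set T) ⊆ (R : Set T))
    (I : Ideal ↥R) (hIT : Ideal.map (algebraMap ↥R T) I = ⊤) :
    Nonempty
      (((I →ₗ[↥R] ↥R) ⧸
          ((Ideal.comap (algebraMap ↥R T) C) •
            (⊤ : Submodule ↥R (I →ₗ[↥R] ↥R)))) ≃ₗ[↥R]
        ((I ⧸ ((Ideal.comap (algebraMap ↥R T) C) • (⊤ : Submodule ↥R I))) →ₗ[↥R]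
          (↥R ⧸ Ideal.comap (algebraMap ↥R T) C))) := by
  exact ⟨Submodule.quotEquivOfEq _ _ (ker_reduceLinearForm_eq hCR hIT).symm ≪≫ₗ
    LinearMap.quotKerEquivOfSurjective _ (reduceLinearForm_surjective hCR hIT)⟩

/-- condition (FP); `I` an ideal of `R` with `IT = T`.  Then
`Hom_R(I,R)/(C·Hom_R(I,R)) ≅ Hom_{R/C}(I/CI, R/C)`; since both sides are killed by
`C`, an `R`-linear equivalence is the same as an `R/C`-linear one. -/
theorem stmt_8 (T : Type*) [CommRing T] (R : Subring T) (C : Ideal T)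
    (hCR : (C : Set T) ⊆ (R : Set T))
    (hreg : ∃ c ∈ C, c ∈ nonZeroDivisors T)
    (hflat : Module.Flat ↥R T) (hprin : C.IsPrincipal)
    (I : Ideal ↥R) (hIT : Ideal.map (algebraMap ↥R T) I = ⊤) :
    Nonempty
      (((I →ₗ[↥R] ↥R) ⧸
          ((Ideal.comap (algebraMap ↥R T) C) •
            (⊤ : Submodule ↥R (I →ₗ[↥R] ↥R)))) ≃ₗ[↥R]
        ((I ⧸ ((Ideal.comap (algebraMap ↥R T) C) • (⊤ : Submodule ↥R I))) →ₗ[↥R]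
          (↥R ⧸ Ideal.comap (algebraMap ↥R T) C))) :=
  stmt_8_general T R C hCR I hIT
end

section
/- Let R be a subring of a commutative ring T with a common ideal C containing a T-regular element, and assume T is flat over R. If C is finitely generated as an ideal of R, then B = T/C is faithfully flat as an A = R/C module. -/
/-! Since `C·T = C`, the ring `B = T ⧸ C` is the base change `A ⊗[R] T`, hence flat over `A`.
For faithfulness it suffices that `M·T ≠ T` for every proper ideal `M` of `R`. If `M·T = T`
then, `C` being an ideal of `T` that lies in `R`, we get `M·C = C`; as `C` is finitely generated
and faithful over `R` (it contains a non-zerodivisor of `T`), Nakayama's lemma forces `M = R`. -/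

open Algebra.TensorProduct in
theorem Module.Flat.quotient_map {A B : Type*} [CommRing A] [CommRing B] [Algebra A B]
    [Module.Flat A B] (I : Ideal A) : Module.Flat (A ⧸ I) (B ⧸ I.map (algebraMap A B)) :=
  Module.Flat.of_linearEquiv (quotIdealMapEquivQuotTensor B I).toLinearEquiv

theorem Submodule.eq_top_of_le_smul_of_annihilator_eq_bot {A M : Type*} [CommRing A]
    [AddCommGroup M] [Module A M] {I : Ideal A} {N : Submodule A M} (hN : N.FG)
    (hann : N.annihilator = ⊥) (h : N ≤ I • N) : I = ⊤ := by
  obtain ⟨r, hr1, hr0⟩ := exists_sub_one_mem_and_smul_eq_zero_of_fg_of_le_smul I N hN h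
  have hr : r = 0 := by rwa [← Submodule.mem_bot A, ← hann, Submodule.mem_annihilator]
  rw [Ideal.eq_top_iff_one, ← neg_mem_iff]
  simpa [hr] using hr1

theorem Ideal.map_comap_mk_eq_top_of_map_eq_top {A B : Type*} [CommRing A] [CommRing B]
    [Algebra A B] {I : Ideal A} {m : Ideal (A ⧸ I)}
    (h : m.map (algebraMap (A ⧸ I) (B ⧸ I.map (algebraMap A B))) = ⊤) :
    (m.comap (Ideal.Quotient.mk I)).map (algebraMap A B) = ⊤ := by
  set M := m.comap (Ideal.Quotient.mk I)
  have hIM : I.map (algebraMap A B) ≤ M.map (algebraMap A B) :=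
    Ideal.map_mono fun x hx => by simp [M, Ideal.Quotient.eq_zero_iff_mem.2 hx]
  have hcomp : (algebraMap (A ⧸ I) (B ⧸ I.map (algebraMap A B))).comp (Ideal.Quotient.mk I) =
      (Ideal.Quotient.mk _).comp (algebraMap A B) := rfl
  rw [← Ideal.map_comap_of_surjective _ Ideal.Quotient.mk_surjective m, Ideal.map_map, hcomp,
    ← Ideal.map_map] at h
  have := congrArg (Ideal.comap (Ideal.Quotient.mk _)) h
  rwa [Ideal.comap_map_of_surjective' _ Ideal.Quotient.mk_surjective, Ideal.mk_ker,
    Ideal.comap_top, sup_eq_left.2 hIM] at this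

theorem Module.FaithfullyFlat.quotient_map {A B : Type*} [CommRing A] [CommRing B] [Algebra A B]
    [Module.Flat A B] (I : Ideal A)
    (h : ∀ M : Ideal A, M.IsMaximal → M.map (algebraMap A B) ≠ ⊤) :
    Module.FaithfullyFlat (A ⧸ I) (B ⧸ I.map (algebraMap A B)) := by
  have := Module.Flat.quotient_map (B := B) I
  refine ⟨fun m hm htop => h (m.comap (Ideal.Quotient.mk I))
    (Ideal.comap_isMaximal_of_surjective _ Ideal.Quotient.mk_surjective)
    (Ideal.map_comap_mk_eq_top_of_map_eq_top ?_)⟩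
  rwa [Ideal.smul_top_eq_map, Submodule.restrictScalars_eq_top_iff] at htop

namespace Subring

variable {T : Type*} [CommRing T] {R : Subring T} {C : Ideal T}

theorem restrictScalars_ideal_eq_map_comap (hCR : (C : Set T) ⊆ R) :
    C.restrictScalars R = Submodule.map (Algebra.linearMap R T) (C.comap (algebraMap R T)) := by
  ext x
  exact ⟨fun hx => ⟨⟨x, hCR hx⟩, hx, rfl⟩, by rintro ⟨y, hy, rfl⟩; exact hy⟩

theorem map_comap_ideal_eq (hCR : (C : Set T) ⊆ R) :
    (C.comap (algebraMap R T)).map (algebraMap R T) = C :=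
  le_antisymm Ideal.map_comap_le fun c hc =>
    Ideal.mem_map_of_mem (algebraMap R T) (x := ⟨c, hCR hc⟩) hc

theorem smul_comap_ideal_eq_of_map_eq_top (hCR : (C : Set T) ⊆ R) {M : Ideal R}
    (hM : M.map (algebraMap R T) = ⊤) :
    M • C.comap (algebraMap R T) = C.comap (algebraMap R T) := by
  apply Submodule.map_injective_of_injective (f := Algebra.linearMap R T) Subtype.val_injective
  rw [Submodule.map_smul'', ← restrictScalars_ideal_eq_map_comap hCR,
    ← Ideal.smul_restrictScalars, hM, Submodule.top_smul]

theorem annihilator_comap_ideal_eq_bot (hCR : (C : Set T) ⊆ R)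
    (hreg : ∃ c ∈ C, c ∈ nonZeroDivisors T) :
    (C.comap (algebraMap R T)).annihilator = ⊥ := by
  obtain ⟨c, hcC, hc⟩ := hreg
  refine eq_bot_iff.2 fun r hr => ?_
  have hrc : r * ⟨c, hCR hcC⟩ = 0 := Submodule.mem_annihilator.1 hr _ hcC
  exact Subtype.val_injective (hc.2 r (congrArg Subtype.val hrc))

theorem map_ideal_ne_top_of_ne_top (hCR : (C : Set T) ⊆ R)
    (hreg : ∃ c ∈ C, c ∈ nonZeroDivisors T) (hfg : (C.comap (algebraMap R T)).FG)
    {M : Ideal R} (hM : M ≠ ⊤) :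
    M.map (algebraMap R T) ≠ ⊤ := fun h =>
  hM <| Submodule.eq_top_of_le_smul_of_annihilator_eq_bot hfg
    (annihilator_comap_ideal_eq_bot hCR hreg) (smul_comap_ideal_eq_of_map_eq_top hCR h).ge

end Subring

/-- `T` flat over `R` and `C` finitely generated as an ideal of `R`
imply `B = T/C` is faithfully flat over `A = R/C` (via the induced ring map). -/
theorem stmt_9 (T : Type*) [CommRing T] (R : Subring T) (C : Ideal T)
    (hCR : (C : Set T) ⊆ (R : Set T))
    (hreg : ∃ c ∈ C, c ∈ nonZeroDivisors T)
    (hflat : Module.Flat ↥R T)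
    (hfg : (Ideal.comap (algebraMap ↥R T) C).FG) :
    @Module.FaithfullyFlat (↥R ⧸ Ideal.comap (algebraMap ↥R T) C) (T ⧸ C) _ _
      (Ideal.quotientMap C (algebraMap ↥R T) le_rfl).toModule := by
  set I := C.comap (algebraMap R T)
  let := (Ideal.quotientMap C (algebraMap R T) le_rfl).toAlgebra
  have : Module.FaithfullyFlat (R ⧸ I) (T ⧸ I.map (algebraMap R T)) :=
    .quotient_map I fun M hM => Subring.map_ideal_ne_top_of_ne_top hCR hreg hfg hM.ne_top
  let e : (T ⧸ I.map (algebraMap R T)) ≃ₐ[R ⧸ I] T ⧸ C :=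
    AlgEquiv.ofRingEquiv (f := Ideal.quotEquivOfEq (Subring.map_comap_ideal_eq hCR)) fun x => by
      obtain ⟨x, rfl⟩ := Ideal.Quotient.mk_surjective x
      rfl
  exact .of_linearEquiv _ _ e.symm.toLinearEquiv
end

section
/- Let R be a subring of a commutative ring T with a common ideal C containing a T-regular element, with R ≠ T, and assume T is flat as an R-module. Then C is not finitely generated as an ideal of R. -/
/-! If the conductor `C` were finitely generated over `R`, it would be a finitely generated
`R`-module on which `T` acts faithfully (it contains a regular element `c`), so `T` would be
integral over `R` by Cayley–Hamilton. An integral, injective, flat extension is faithfully flat,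
hence `cT ∩ R = cR`. For every `t ∈ T` we have `ct ∈ C ⊆ R`, so `ct = cs` with `s ∈ R`, and
cancelling `c` gives `t ∈ R`, contradicting `R ≠ T`. -/

theorem Algebra.IsIntegral.of_finite_of_faithfulSMul (R S M : Type*) [CommRing R] [CommRing S]
    [Algebra R S] [AddCommGroup M] [Module R M] [Module S M] [IsScalarTower R S M]
    [Module.Finite R M] [FaithfulSMul S M] : Algebra.IsIntegral R S :=
  Algebra.IsIntegral.of_injective (Algebra.lsmul R R M)
    fun _ _ h ↦ FaithfulSMul.eq_of_smul_eq_smul (LinearMap.congr_fun h)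

theorem Ideal.faithfulSMul_of_mem_nonZeroDivisors {S : Type*} [CommRing S] {I : Ideal S} {c : S}
    (hcI : c ∈ I) (hc : c ∈ nonZeroDivisors S) : FaithfulSMul S I :=
  ⟨fun h ↦ (mul_cancel_right_mem_nonZeroDivisors hc).1 (congrArg Subtype.val (h ⟨c, hcI⟩))⟩

theorem Algebra.IsIntegral.of_ideal_fg_of_mem_nonZeroDivisors {R S : Type*} [CommRing R]
    [CommRing S] [Algebra R S] {I : Ideal S} (hI : (I.restrictScalars R).FG) {c : S} (hcI : c ∈ I)
    (hc : c ∈ nonZeroDivisors S) : Algebra.IsIntegral R S :=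
  have : Module.Finite R I := Module.Finite.iff_fg.2 hI
  have := Ideal.faithfulSMul_of_mem_nonZeroDivisors hcI hc
  .of_finite_of_faithfulSMul R S I

theorem Module.FaithfullyFlat.of_flat_of_isIntegral (A B : Type*) [CommRing A] [CommRing B]
    [Algebra A B] [Module.Flat A B] [Algebra.IsIntegral A B] [FaithfulSMul A B] :
    Module.FaithfullyFlat A B :=
  .of_comap_surjective (Algebra.IsIntegral.comap_surjective A B)

theorem Module.FaithfullyFlat.exists_algebraMap_eq_of_mul_eq_algebraMap {A B : Type*}
    [CommRing A] [CommRing B] [Algebra A B] [Module.FaithfullyFlat A B] {c a : A} {t : B}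
    (hc : algebraMap A B c ∈ nonZeroDivisors B) (h : algebraMap A B c * t = algebraMap A B a) :
    ∃ s, algebraMap A B s = t := by
  have ha : a ∈ ((Ideal.span {c}).map (algebraMap A B)).comap (algebraMap A B) := by
    rw [Ideal.mem_comap, Ideal.map_span, Set.image_singleton, ← h]
    exact Ideal.mul_mem_right _ _ (Ideal.subset_span rfl)
  rw [Ideal.comap_map_eq_self_of_faithfullyFlat, Ideal.mem_span_singleton'] at ha
  obtain ⟨s, rfl⟩ := ha
  refine ⟨s, (mul_cancel_left_mem_nonZeroDivisors hc).1 ?_⟩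
  rw [h, map_mul, mul_comm]

/-- in a non-trivial (`R ≠ T`) regular conductor situation with `T`
flat over `R`, the conductor `C` is not finitely generated as an ideal of `R`. -/
theorem stmt_10 (T : Type*) [CommRing T] (R : Subring T) (hRT : R ≠ ⊤) (C : Ideal T)
    (hCR : (C : Set T) ⊆ (R : Set T))
    (hreg : ∃ c ∈ C, c ∈ nonZeroDivisors T)
    (hflat : Module.Flat ↥R T) :
    ¬ (Ideal.comap (algebraMap ↥R T) C).FG := by
  intro hfg
  obtain ⟨c, hcC, hc⟩ := hreg
  have hCfg : (C.restrictScalars R).FG := by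
    convert Submodule.FG.map (Algebra.linearMap R T) hfg
    ext x
    exact ⟨fun hx ↦ ⟨⟨x, hCR hx⟩, hx, rfl⟩, by rintro ⟨r, hr, rfl⟩; exact hr⟩
  have := Algebra.IsIntegral.of_ideal_fg_of_mem_nonZeroDivisors hCfg hcC hc
  have := Module.FaithfullyFlat.of_flat_of_isIntegral R T
  refine hRT (R.eq_top_iff'.2 fun t ↦ ?_)
  obtain ⟨s, rfl⟩ := Module.FaithfullyFlat.exists_algebraMap_eq_of_mul_eq_algebraMap
    (c := (⟨c, hCR hcC⟩ : R)) (a := ⟨c * t, hCR (C.mul_mem_right t hcC)⟩) hc rfl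
  exact s.2
end

section
/- Let R be a subring of a commutative ring T with a common ideal C containing a T-regular element, with R ≠ T. If C is a maximal ideal of R (i.e., R/C is a field), then T is not flat as an R-module. -/
/-!
Pick `t ∈ T \ R` and a `T`-regular `c ∈ C`; then `c` and `c * t` lie in `R`. If `T` were flat
over `R`, extension of ideals would commute with colons, so `(c R : c t) T = (c T : c t) = T`.
But since `c` is regular, `(c R : c t)` is the conductor `{r ∈ R | r t ∈ R}`, which contains `C`,
misses `1` and hence equals the maximal ideal `C`; so `C = C T = T`, forcing `R = T`.
-/

open Module

theorem Ideal.map_colon_span_singleton_eq_top_of_flat {R T : Type*} [CommRing R] [CommRing T]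
    [Algebra R T] [Flat R T] {a b : R} (hab : algebraMap R T b ∈ Ideal.span {algebraMap R T a}) :
    ((Ideal.span {a}).colon (Ideal.span {b} : Set R)).map (algebraMap R T) = ⊤ := by
  obtain ⟨t, ht⟩ := Ideal.mem_span_singleton'.mp hab
  have hrel : ∑ i, ![a, -b] i • ![t, 1] i = 0 := by
    simp [Algebra.smul_def, ← ht, mul_comm]
  obtain ⟨k, α, y, hxy, hα⟩ := Flat.isTrivialRelation_of_sum_smul_eq_zero (R := R) hrel
  have hmem : ∀ j, α 1 j ∈ (Ideal.span {a}).colon (Ideal.span {b} : Set R) := by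
    intro j
    have hj : a * α 0 j = b * α 1 j := by
      simpa [← sub_eq_add_neg, sub_eq_zero] using hα j
    rw [Submodule.mem_colon_span_singleton, smul_eq_mul, mul_comm, ← hj]
    exact Ideal.mem_span_singleton.mpr (dvd_mul_right a _)
  rw [Ideal.eq_top_iff_one, show (1 : T) = ∑ j, α 1 j • y j by simpa using hxy 1]
  exact Ideal.sum_mem _ fun j _ ↦ by
    rw [Algebra.smul_def]
    exact Ideal.mul_mem_right _ _ (Ideal.mem_map_of_mem _ (hmem j))

namespace Subring

variable {T : Type*} [CommRing T] {R : Subring T}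

theorem mul_mem_of_mem_colon_span {c s r : R} {t : T} (hc : (c : T) ∈ nonZeroDivisors T)
    (hs : (s : T) = c * t) (hr : r ∈ (Ideal.span {c}).colon (Ideal.span {s} : Set R)) :
    (r : T) * t ∈ R := by
  obtain ⟨q, hq⟩ := Ideal.mem_span_singleton'.mp (Submodule.mem_colon_span_singleton.mp hr)
  have hqT : (q : T) * c = r * (c * t) := by
    rw [← hs]
    exact_mod_cast hq
  have hcancel : ((r : T) * t - q) * c = 0 := by linear_combination -hqT
  rw [sub_eq_zero.mp (mem_nonZeroDivisors_iff_right.mp hc _ hcancel)]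
  exact q.2

theorem mem_comap_of_mul_mem {C : Ideal T} (hCR : (C : Set T) ⊆ R)
    (hmax : (C.comap (algebraMap R T)).IsMaximal) {t : T} (ht : t ∉ R) {r : R}
    (hrt : (r : T) * t ∈ R) : r ∈ C.comap (algebraMap R T) := by
  by_contra hr
  obtain ⟨u, m, hm, hum⟩ := hmax.exists_inv hr
  have humT : (u : T) * r + m = 1 := by exact_mod_cast hum
  have htm : t * m ∈ R := hCR (C.mul_mem_left t hm)
  have htR : t = u * (r * t) + t * m := by linear_combination -t * humT
  exact ht <| htR ▸ R.add_mem (R.mul_mem u.2 hrt) htm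

end Subring

/-- non-trivial regular conductor situation with `C` maximal as an
ideal of `R`: then `T` is not flat over `R`. -/
theorem stmt_11 (T : Type*) [CommRing T] (R : Subring T) (hRT : R ≠ ⊤) (C : Ideal T)
    (hCR : (C : Set T) ⊆ (R : Set T))
    (hreg : ∃ c ∈ C, c ∈ nonZeroDivisors T)
    (hmax : (Ideal.comap (algebraMap ↥R T) C).IsMaximal) :
    ¬ Module.Flat ↥R T := by
  intro hflat
  obtain ⟨c, hcC, hc⟩ := hreg
  obtain ⟨t, ht⟩ : ∃ t, t ∉ R := by
    by_contra! h
    exact hRT (R.eq_top_iff'.mpr h)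
  let c' : R := ⟨c, hCR hcC⟩
  let s : R := ⟨c * t, hCR (C.mul_mem_right t hcC)⟩
  have hcolon : (Ideal.span {c'}).colon (Ideal.span {s} : Set R) ≤ C.comap (algebraMap R T) :=
    fun r hr ↦ Subring.mem_comap_of_mul_mem hCR hmax ht
      (Subring.mul_mem_of_mem_colon_span (c := c') hc rfl hr)
  have hCtop : C = ⊤ := by
    rw [eq_top_iff, ← Ideal.map_colon_span_singleton_eq_top_of_flat (a := c') (b := s)
      (Ideal.mem_span_singleton'.mpr ⟨t, mul_comm _ _⟩)]
    exact (Ideal.map_mono hcolon).trans Ideal.map_comap_le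
  exact hRT (eq_top_iff.mpr fun x _ ↦ hCR (hCtop ▸ Submodule.mem_top))
end

section
/- Let R = ℚ + xℝ[x], the subring of ℝ[x] consisting of polynomials with rational constant term. Then ℝ[x] is not flat as an R-module. -/
/-!
For a proper subfield `K ⊂ L`, pick `α ∈ L \ K` and set `R = K + X L[X]`. In the `R`-module `L[X]`
the relation `X • α + (α X) • (-1) = 0` is not trivial: by the equational criterion a flat module
would give `α = ∑ⱼ aⱼ yⱼ` with `X aⱼ + α X bⱼ = 0` and `aⱼ, bⱼ ∈ R`. Cancelling `X`,
`aⱼ(0) + α bⱼ(0) = 0` with `aⱼ(0), bⱼ(0) ∈ K`, which forces `aⱼ(0) = 0` and hence `α = 0`.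
For `ℚ ⊂ ℝ` take `α = √2`.
-/

open Polynomial

theorem Subfield.eq_zero_of_add_mul_eq_zero {L : Type*} [Field L] (K : Subfield L) {α a b : L}
    (hα : α ∉ K) (ha : a ∈ K) (hb : b ∈ K) (h : a + α * b = 0) : b = 0 := by
  by_contra hb0
  have hα_eq : α = -a / b := by
    field_simp
    linear_combination h
  exact hα (hα_eq ▸ K.div_mem (K.neg_mem ha) hb)

theorem Polynomial.X_mul_mem_comap_constantCoeff {B : Type*} [CommRing B] (A : Subring B)
    (p : B[X]) : X * p ∈ A.comap constantCoeff := by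
  simp [A.zero_mem]

theorem Polynomial.constantCoeff_eq_zero_of_add_C_mul_eq_zero {L : Type*} [Field L]
    (K : Subfield L) {α : L} {p q : L[X]} (hα : α ∉ K) (hp : constantCoeff p ∈ K)
    (hq : constantCoeff q ∈ K) (h : p + C α * q = 0) : constantCoeff p = 0 := by
  have hconst : constantCoeff p + α * constantCoeff q = 0 := by
    simpa using congrArg constantCoeff h
  have hq0 := K.eq_zero_of_add_mul_eq_zero hα hp hq hconst
  simpa [hq0] using hconst

theorem Polynomial.not_flat_comap_constantCoeff {L : Type*} [Field L] (K : Subfield L)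
    (hK : K ≠ ⊤) :
    ¬ Module.Flat (K.toSubring.comap (constantCoeff (R := L))) L[X] := by
  intro hflat
  obtain ⟨α, hα⟩ : ∃ α, α ∉ K := by simpa [SetLike.ext_iff] using hK
  set R := K.toSubring.comap (constantCoeff (R := L))
  let f : Fin 2 → R := ![⟨X * 1, X_mul_mem_comap_constantCoeff _ 1⟩,
    ⟨X * C α, X_mul_mem_comap_constantCoeff _ (C α)⟩]
  let x : Fin 2 → L[X] := ![C α, -1]
  have hrel : ∑ i, f i • x i = 0 := by
    rw [Fin.sum_univ_two]
    show X * 1 * C α + X * C α * -1 = 0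
    ring
  obtain ⟨k, a, y, hxy, ha⟩ := Module.Flat.isTrivialRelation_of_sum_smul_eq_zero hrel
  have ha0 : ∀ j, (a 0 j : L[X]).coeff 0 = 0 := by
    intro j
    have hj : X * ((a 0 j : L[X]) + C α * (a 1 j : L[X])) = 0 := by
      have := congrArg Subtype.val (ha j)
      simp only [Fin.sum_univ_two, Subring.coe_add, Subring.coe_mul, f, Matrix.cons_val_zero,
        Matrix.cons_val_one, ZeroMemClass.coe_zero] at this
      linear_combination this
    exact constantCoeff_eq_zero_of_add_C_mul_eq_zero K hα (a 0 j).2 (a 1 j).2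
      ((mul_eq_zero.mp hj).resolve_left X_ne_zero)
  have hα0 : α = 0 := by
    simpa [x, Subring.smul_def, ha0] using congrArg (coeff · 0) (hxy 0)
  exact hα (hα0 ▸ K.zero_mem)

/-- for `R = ℚ + xℝ[x]` (polynomials over `ℝ` with rational constant
term), `ℝ[x]` is not flat as an `R`-module. -/
theorem stmt_12 :
    ¬ Module.Flat
        ↥(Subring.comap (Polynomial.constantCoeff (R := ℝ))
            (algebraMap ℚ ℝ).range)
        (Polynomial ℝ) :=
  not_flat_comap_constantCoeff (algebraMap ℚ ℝ).fieldRange fun h ↦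
    irrational_sqrt_two ((RingHom.fieldRange_eq_top_iff.mp h) √2)
end

section
/- Let R be a subring of a commutative ring T with a common ideal C containing a T-regular element, with T flat over R. If R is a coherent ring, then T is a coherent ring. -/
/-!
If `J = (s)` is a finitely generated ideal of `T` and `c ∈ C` is `T`-regular, then `c • s ⊆ R`
generates a finitely generated ideal `I` of `R`, finitely presented by coherence of `R`.
Flatness makes `T ⊗[R] I → T` injective with image `I T = c J`, so `c J ≅ J` is a base change
of a finitely presented module.
-/

/-- A commutative ring is coherent if every finitely generated ideal is finitely
presented (as a module). -/
def IsCoherentRing (R : Type*) [CommRing R] : Prop :=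
  ∀ I : Ideal R, I.FG → Module.FinitePresentation R I

namespace Ideal

variable {R S : Type*} [CommRing R] [CommRing S] [Algebra R S]

theorem injective_liftBaseChange_of_flat [Module.Flat R S] (I : Ideal R) :
    Function.Injective ((Algebra.linearMap R S ∘ₗ I.subtype).liftBaseChange S) := by
  have hcomp : ((Algebra.linearMap R S ∘ₗ I.subtype).liftBaseChange S).restrictScalars R =
      (TensorProduct.rid R S).toLinearMap ∘ₗ I.subtype.lTensor S := by
    ext s i
    simp [Algebra.smul_def, mul_comm]
  rw [← LinearMap.coe_restrictScalars R, hcomp]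
  exact (TensorProduct.rid R S).injective.comp
    (Module.Flat.lTensor_preserves_injective_linearMap _ I.injective_subtype)

theorem range_liftBaseChange_algebraMap (I : Ideal R) :
    LinearMap.range ((Algebra.linearMap R S ∘ₗ I.subtype).liftBaseChange S) =
      I.map (algebraMap R S) := by
  rw [LinearMap.range_liftBaseChange, LinearMap.range_comp, Submodule.range_subtype]
  rfl

theorem finitePresentation_map_of_flat [Module.Flat R S] (I : Ideal R)
    [Module.FinitePresentation R I] : Module.FinitePresentation S (I.map (algebraMap R S)) :=
  .of_equiv <| (LinearEquiv.ofInjective _ I.injective_liftBaseChange_of_flat).trans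
    (LinearEquiv.ofEq _ _ I.range_liftBaseChange_algebraMap)

end Ideal

theorem Submodule.finitePresentation_of_map_of_injective {R M M' : Type*} [Ring R]
    [AddCommGroup M] [Module R M] [AddCommGroup M'] [Module R M'] {f : M →ₗ[R] M'}
    (hf : Function.Injective f) (N : Submodule R M) [Module.FinitePresentation R (N.map f)] :
    Module.FinitePresentation R N :=
  .of_equiv (N.equivMapOfInjective f hf).symm

theorem Subring.map_span_preimage_mulLeft {T : Type*} [CommRing T] (R : Subring T) {c : T}
    {s : Set T} (hs : ∀ t ∈ s, c * t ∈ R) :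
    (Ideal.span (((↑) : R → T) ⁻¹' ((c * ·) '' s))).map (algebraMap R T) =
      Submodule.map (LinearMap.mulLeft T c) (Ideal.span s) := by
  rw [Ideal.map_span, Ideal.span, Submodule.map_span]
  congr 1
  rw [show ⇑(algebraMap R T) = ((↑) : R → T) from rfl, Set.image_preimage_eq_of_subset]
  · rfl
  · rintro _ ⟨t, ht, rfl⟩
    exact ⟨⟨c * t, hs t ht⟩, rfl⟩

/-- regular conductor situation with `T` flat over `R`; if `R` is
coherent, then so is `T`. -/
theorem stmt_13 (T : Type*) [CommRing T] (R : Subring T) (C : Ideal T)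
    (hCR : (C : Set T) ⊆ (R : Set T))
    (hreg : ∃ c ∈ C, c ∈ nonZeroDivisors T)
    (hflat : Module.Flat ↥R T)
    (hR : IsCoherentRing ↥R) :
    IsCoherentRing T := by
  rintro J ⟨s, rfl⟩
  obtain ⟨c, hcC, hc⟩ := hreg
  have hcs : ∀ t ∈ (s : Set T), c * t ∈ R := fun t _ => hCR (C.mul_mem_right t hcC)
  set I : Ideal R := Ideal.span (((↑) : R → T) ⁻¹' ((c * ·) '' s))
  have hI : I.FG := Submodule.fg_def.mpr
    ⟨_, (s.finite_toSet.image _).preimage Subtype.val_injective.injOn, rfl⟩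
  have : Module.FinitePresentation R I := hR I hI
  have := I.finitePresentation_map_of_flat (S := T)
  rw [R.map_span_preimage_mulLeft hcs] at this
  exact Submodule.finitePresentation_of_map_of_injective (f := LinearMap.mulLeft T c)
    (isRegular_iff_mem_nonZeroDivisors.mpr hc).left _
end

section
/- Let R be a subring of a commutative ring T with R ≠ 0, with conductor C (the largest common ideal). If the conductor square is trivial (equivalently T = R and C = R), and every nonzero 2-generated ideal I of R is isomorphic to an ideal I' of R with I'T = T, then R is a Bézout domain. -/
/-- An ideal isomorphic to the unit ideal is principal. -/
lemma aux_principal_of_equiv_top {R : Type*} [CommRing R] (I : Ideal R)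
    (e : I ≃ₗ[R] (⊤ : Ideal R)) : I.IsPrincipal := by
  refine ⟨⟨(e.symm ⟨1, trivial⟩ : I), ?_⟩⟩
  apply le_antisymm
  · intro x hx
    set g : I := e.symm ⟨1, trivial⟩ with hg
    have key : (⟨x, hx⟩ : I) = ((e ⟨x, hx⟩ : R)) • g := by
      apply e.injective
      rw [map_smul, hg, e.apply_symm_apply]
      ext
      simp
    have : x = ((e ⟨x, hx⟩ : R)) * (g : R) := by
      have := congrArg (Subtype.val) key
      simpa [smul_eq_mul] using this
    rw [Ideal.submodule_span_eq, Ideal.mem_span_singleton]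
    exact ⟨_, by rw [this]; ring⟩
  · rw [Ideal.submodule_span_eq, Ideal.span_le, Set.singleton_subset_iff]
    exact (e.symm ⟨1, trivial⟩).2

/-- trivial conductor square (`T = R`, `C = R`), with `R ≠ 0`.
Condition (U1) (with `T = R`) says every nonzero 2-generated ideal of `R` is
isomorphic to an ideal `I'` with `I'R = I' = ⊤`.  Then `R` is a Bézout domain. -/
theorem stmt_15 (R : Type*) [CommRing R] [Nontrivial R]
    (hU1 : ∀ I : Ideal R, I ≠ ⊥ → (∃ a b : R, I = Ideal.span {a, b}) →
      ∃ I' : Ideal R, Nonempty (I ≃ₗ[R] I') ∧ I' = ⊤) :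
    IsDomain R ∧ IsBezout R := by
  have hnzd : NoZeroDivisors R := by
    constructor
    intro a b hab
    by_cases ha : a = 0
    · exact Or.inl ha
    right
    obtain ⟨I', ⟨e⟩, hI'⟩ := hU1 (Ideal.span {a})
      (by simpa [Ideal.span_singleton_eq_bot] using ha)
      ⟨a, a, by simp⟩
    subst hI'
    set g : Ideal.span ({a} : Set R) := e.symm ⟨1, trivial⟩ with hg
    obtain ⟨r, hr⟩ := Ideal.mem_span_singleton.mp g.2
    have hbg : b • g = 0 := by
      ext
      have : b * (g : R) = 0 := by rw [hr]; calc b * (a * r) = r * (a*b) := by ring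
        _ = 0 := by rw [hab, mul_zero]
      simpa [smul_eq_mul] using this
    have : e.symm ⟨b, trivial⟩ = 0 := by
      have h1 : (⟨b, trivial⟩ : (⊤ : Ideal R)) = b • (⟨1, trivial⟩ : (⊤ : Ideal R)) := by
        ext; simp
      rw [h1, map_smul, ← hg, hbg]
    have := e.symm.injective (by rw [this, map_zero] : e.symm ⟨b, trivial⟩ = e.symm 0)
    simpa using congrArg Subtype.val this
  refine ⟨NoZeroDivisors.to_isDomain R, ?_⟩
  rw [IsBezout.iff_span_pair_isPrincipal]
  intro x y
  by_cases h : Ideal.span {x, y} = ⊥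
  · rw [h]; exact ⟨⟨0, (Ideal.span_singleton_eq_bot.mpr rfl).symm⟩⟩
  · obtain ⟨I', ⟨e⟩, hI'⟩ := hU1 _ h ⟨x, y, rfl⟩
    subst hI'
    exact aux_principal_of_equiv_top _ e
end

section
/- Let R be a subring of a commutative ring T with a common ideal C containing a T-regular element, with T flat over R. If R is a GCD domain, then T is a GCD domain. -/
/-!
Since `c` is regular and `c • T ⊆ R`, multiplication by `c` embeds `T` into the domain `R`, so `T`
is a domain. For `a b : T`, the ideal `(c a) R ∩ (c b) R` is principal, say `d R`. Over a flat
extension, extension of ideals commutes with intersections of principal ideals (equational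
criterion for flatness), so `(c a) T ∩ (c b) T = d T`; cancelling `c` gives `a T ∩ b T = e T`
where `d = c e`.
-/

/-- A GCD domain: an integral domain in which the intersection of any two
principal ideals is principal. -/
def IsGCDDomain (R : Type*) [CommRing R] : Prop :=
  IsDomain R ∧ ∀ a b : R, (Ideal.span {a} ⊓ Ideal.span {b} : Ideal R).IsPrincipal

theorem Ideal.map_span_singleton_inf_span_singleton {R T : Type*} [CommRing R] [CommRing T]
    [Algebra R T] [Module.Flat R T] (f g : R) :
    (Ideal.span {f} ⊓ Ideal.span {g}).map (algebraMap R T) =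
      Ideal.span {algebraMap R T f} ⊓ Ideal.span {algebraMap R T g} := by
  refine le_antisymm ((Ideal.map_inf_le _).trans_eq ?_) ?_
  · simp only [Ideal.map_span, Set.image_singleton]
  rintro x ⟨hxf, hxg⟩
  obtain ⟨t, rfl⟩ := Ideal.mem_span_singleton.mp hxf
  obtain ⟨s, hs⟩ := Ideal.mem_span_singleton.mp hxg
  obtain ⟨k, A, y, hy, hA⟩ := Module.Flat.isTrivialRelation_of_sum_smul_eq_zero
    (f := ![f, -g]) (x := ![t, s]) (by simp [Algebra.smul_def]; linear_combination hs)
  have hmem : ∀ j, f * A 0 j ∈ Ideal.span {f} ⊓ Ideal.span {g} := fun j =>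
    ⟨Ideal.mul_mem_right _ _ (Ideal.mem_span_singleton_self f), by
      have h := hA j
      simp only [Fin.sum_univ_two, Matrix.cons_val_zero, Matrix.cons_val_one] at h
      rw [show f * A 0 j = g * A 1 j by linear_combination h]
      exact Ideal.mul_mem_right _ _ (Ideal.mem_span_singleton_self g)⟩
  have ht : t = ∑ j, A 0 j • y j := by simpa using hy 0
  rw [ht, Finset.mul_sum]
  refine Ideal.sum_mem _ fun j _ => ?_
  rw [Algebra.smul_def, ← mul_assoc, ← map_mul]
  exact Ideal.mul_mem_right _ _ (Ideal.mem_map_of_mem _ (hmem j))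

theorem Subring.isDomain_of_mul_mem {T : Type*} [CommRing T] (R : Subring T) [IsDomain R]
    {c : T} (hc : c ∈ nonZeroDivisors T) (hcR : ∀ t, c * t ∈ R) : IsDomain T := by
  have : Nontrivial T := Subtype.val_injective.nontrivial (α := R)
  have : NoZeroDivisors T := ⟨fun {a b} hab => by
    have h : (⟨c * a, hcR a⟩ * ⟨c * b, hcR b⟩ : R) = 0 :=
      Subtype.ext <| show c * a * (c * b) = 0 by linear_combination c * c * hab
    simpa [Subtype.ext_iff, mul_left_mem_nonZeroDivisors_eq_zero_iff hc] using mul_eq_zero.mp h⟩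
  exact NoZeroDivisors.to_isDomain T

theorem Ideal.isPrincipal_span_inf_span_of_mul_left {T : Type*} [CommRing T] [IsDomain T]
    {c : T} (hc : c ≠ 0) (a b : T)
    (h : (Ideal.span {c * a} ⊓ Ideal.span {c * b} : Ideal T).IsPrincipal) :
    (Ideal.span {a} ⊓ Ideal.span {b} : Ideal T).IsPrincipal := by
  obtain ⟨⟨d, hd⟩⟩ := h
  obtain ⟨e, rfl⟩ : c ∣ d := dvd_of_mul_right_dvd <| Ideal.mem_span_singleton.mp <|
    (hd ▸ Ideal.mem_span_singleton_self d : d ∈ Ideal.span {c * a} ⊓ Ideal.span {c * b}).1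
  refine ⟨⟨e, Ideal.ext fun x => ?_⟩⟩
  have hx := congrArg (c * x ∈ ·) hd
  simpa [Ideal.mem_span_singleton, mul_dvd_mul_iff_left hc] using hx

/-- regular conductor situation with `T` flat over `R`; if `R` is a
GCD domain, then so is `T`. -/
theorem stmt_16 (T : Type*) [CommRing T] (R : Subring T) (C : Ideal T)
    (hCR : (C : Set T) ⊆ (R : Set T))
    (hreg : ∃ c ∈ C, c ∈ nonZeroDivisors T)
    (hflat : Module.Flat ↥R T)
    (hR : IsGCDDomain ↥R) :
    IsGCDDomain T := by
  obtain ⟨c, hcC, hc⟩ := hreg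
  obtain ⟨_, hRgcd⟩ := hR
  have hcR : ∀ t, c * t ∈ R := fun t => hCR (C.mul_mem_right t hcC)
  have hT : IsDomain T := R.isDomain_of_mul_mem hc hcR
  refine ⟨hT, fun a b => Ideal.isPrincipal_span_inf_span_of_mul_left
    (nonZeroDivisors.ne_zero hc) a b ?_⟩
  obtain ⟨⟨d, hd⟩⟩ := hRgcd ⟨c * a, hcR a⟩ ⟨c * b, hcR b⟩
  have hmap := Ideal.map_span_singleton_inf_span_singleton (T := T)
    (⟨c * a, hcR a⟩ : R) ⟨c * b, hcR b⟩
  rw [hd, ← Ideal.span, Ideal.map_span, Set.image_singleton] at hmap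
  exact ⟨⟨d, hmap.symm⟩⟩
end

section
/- Let R be a subring of a commutative ring T with a common ideal C containing a T-regular element, with T flat over R. If R is quasi-coherent (every annihilator (0 :_R a) is finitely generated and every finite intersection of principal ideals is finitely generated), then T is quasi-coherent. -/
/-!
Multiplication by the `T`-regular element `c ∈ C ⊆ R` moves everything into ideals generated by
elements of `R`: `(0 :_T a) = (0 :_T ca)` and `c · ⋂ aᵢT = ⋂ caᵢT`, with `ca, caᵢ ∈ R`, and
`x ↦ cx` is injective. By the equational criterion, extension of ideals along the flat map
`R → T` commutes with annihilators of elements and with finite intersections, so these ideals are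
extensions of finitely generated ideals of `R`.
-/

section Flat

variable {S T : Type*} [CommRing S] [CommRing T] [Algebra S T] [Module.Flat S T]

theorem Module.Flat.sum_smul_mem_map_inf_of_sum_smul_eq {ι κ : Type*} [Fintype ι] [Fintype κ]
    {f : ι → S} {g : κ → S} {u : ι → T} {v : κ → T}
    (h : ∑ i, f i • u i = ∑ l, g l • v l) :
    ∑ i, f i • u i ∈ (Ideal.span (Set.range f) ⊓ Ideal.span (Set.range g)).map (algebraMap S T) := by
  -- the relation `∑ f i • u i - ∑ g l • v l = 0` is trivial; its coefficients `∑ f i * a i j`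
  -- lie in both ideals
  obtain ⟨k, a, y, hy, ha⟩ := Module.Flat.isTrivialRelation_of_sum_smul_eq_zero (R := S)
    (f := Sum.elim f (-g)) (x := Sum.elim u v)
    (by simp [Fintype.sum_sum_type, neg_smul, h])
  have hfg : ∀ j, ∑ i, f i * a (.inl i) j = ∑ l, g l * a (.inr l) j := fun j => by
    simpa [Fintype.sum_sum_type, sub_eq_zero, ← sub_eq_add_neg] using ha j
  have hsum : ∑ i, f i • u i = ∑ j, (∑ i, f i * a (.inl i) j) • y j := by
    have hu : ∀ i, u i = ∑ j, a (.inl i) j • y j := fun i => hy (.inl i)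
    simp only [hu, Finset.smul_sum, smul_smul, Finset.sum_smul]
    exact Finset.sum_comm
  rw [hsum]
  refine Ideal.sum_mem _ fun j _ => ?_
  rw [Algebra.smul_def]
  refine Ideal.mul_mem_right _ _ (Ideal.mem_map_of_mem _ ⟨?_, hfg j ▸ ?_⟩) <;>
    exact Ideal.sum_mem _ fun i _ => Ideal.mul_mem_right _ _ (Ideal.subset_span ⟨i, rfl⟩)

theorem Ideal.map_inf_of_flat (I J : Ideal S) :
    (I ⊓ J).map (algebraMap S T) = I.map (algebraMap S T) ⊓ J.map (algebraMap S T) := by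
  refine le_antisymm (Ideal.map_inf_le _) fun x ⟨hxI, hxJ⟩ => ?_
  obtain ⟨s, hsI, u, rfl⟩ := (Submodule.mem_span_image_iff_exists_fun T).mp hxI
  obtain ⟨t, htJ, v, hv⟩ := (Submodule.mem_span_image_iff_exists_fun T).mp hxJ
  simp only [smul_eq_mul, mul_comm (u _), mul_comm (v _), ← Algebra.smul_def] at hv ⊢
  refine Ideal.map_mono (inf_le_inf ?_ ?_)
    (Module.Flat.sum_smul_mem_map_inf_of_sum_smul_eq hv.symm)
  · simpa [Ideal.span_le] using hsI
  · simpa [Ideal.span_le] using htJ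

theorem Ideal.map_finsetInf_of_flat {ι : Type*} (s : Finset ι) (I : ι → Ideal S) :
    (s.inf I).map (algebraMap S T) = s.inf fun i => (I i).map (algebraMap S T) := by
  classical
  induction s using Finset.induction with
  | empty => exact Ideal.map_top _
  | insert _ _ _ ih => rw [Finset.inf_insert, Finset.inf_insert, Ideal.map_inf_of_flat, ih]

theorem Ideal.bot_colon_span_algebraMap_of_flat (b : S) :
    (⊥ : Ideal T).colon (Ideal.span {algebraMap S T b}) =
      ((⊥ : Ideal S).colon (Ideal.span {b})).map (algebraMap S T) := by
  refine le_antisymm (fun x hx => ?_) (Ideal.map_le_iff_le_comap.mpr fun r hr => ?_)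
  · rw [Ideal.mem_colon_span_singleton, Ideal.mem_bot, mul_comm,
      ← Algebra.smul_def] at hx
    obtain ⟨k, a, y, hy, ha⟩ := Module.Flat.isTrivialRelation_of_sum_smul_eq_zero (R := S)
      (f := fun _ : Unit => b) (x := fun _ => x) (by simpa using hx)
    rw [show x = _ from hy ()]
    refine Ideal.sum_mem _ fun j _ => ?_
    rw [Algebra.smul_def]
    refine Ideal.mul_mem_right _ _ (Ideal.mem_map_of_mem _ ?_)
    simpa [Ideal.mem_colon_span_singleton, mul_comm] using ha j
  · simp_all [← map_mul]

end Flat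

section NonZeroDivisor

variable {T : Type*} [CommRing T] {c : T}

theorem Ideal.bot_colon_span_mul_of_isLeftRegular (hc : IsLeftRegular c) (a : T) :
    (⊥ : Ideal T).colon (Ideal.span {c * a}) = (⊥ : Ideal T).colon (Ideal.span {a}) := by
  ext x
  simp only [Ideal.mem_colon_span_singleton, Ideal.mem_bot, mul_left_comm x c,
    hc.mul_left_eq_zero_iff]

theorem Ideal.map_mulLeft_span_singleton (c a : T) :
    Submodule.map (LinearMap.mulLeft T c) (Ideal.span {a}) = Ideal.span {c * a} := by
  rw [Ideal.span, Submodule.map_span, Set.image_singleton, LinearMap.mulLeft_apply]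

theorem Ideal.map_mulLeft_finsetInf_span_singleton (hc : IsLeftRegular c) {s : Finset T}
    (hs : s.Nonempty) :
    Submodule.map (LinearMap.mulLeft T c) (s.inf fun a => Ideal.span {a}) =
      s.inf fun a => Ideal.span {c * a} := by
  induction hs using Finset.Nonempty.cons_induction with
  | singleton a => simp only [Finset.inf_singleton, Ideal.map_mulLeft_span_singleton]
  | cons a s _ _ ih =>
    rw [Finset.inf_cons, Finset.inf_cons, Submodule.map_inf _ hc, ih,
      Ideal.map_mulLeft_span_singleton]

end NonZeroDivisor

def IsQuasiCoherentRing (R : Type*) [CommRing R] : Prop :=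
  (∀ a : R, (Submodule.colon (⊥ : Ideal R) (Ideal.span {a})).FG) ∧
    ∀ s : Finset R, (s.inf fun a => (Ideal.span {a} : Ideal R)).FG

/-- regular conductor situation with `T` flat over `R`; if `R` is
quasi-coherent, then so is `T`. -/
theorem stmt_17 (T : Type*) [CommRing T] (R : Subring T) (C : Ideal T)
    (hCR : (C : Set T) ⊆ (R : Set T))
    (hreg : ∃ c ∈ C, c ∈ nonZeroDivisors T)
    (hflat : Module.Flat ↥R T)
    (hR : IsQuasiCoherentRing ↥R) :
    IsQuasiCoherentRing T := by
  classical
  obtain ⟨c, hcC, hc⟩ := hreg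
  have hcl : IsLeftRegular c := (isRegular_iff_mem_nonZeroDivisors.mpr hc).left
  let b (a : T) : R := ⟨c * a, hCR (C.mul_mem_right a hcC)⟩
  refine ⟨fun a => ?_, fun s => ?_⟩
  · rw [← Ideal.bot_colon_span_mul_of_isLeftRegular hcl,
      show c * a = algebraMap R T (b a) from rfl, Ideal.bot_colon_span_algebraMap_of_flat]
    exact (hR.1 (b a)).map _
  · rcases s.eq_empty_or_nonempty with rfl | hs
    · exact ⟨{1}, by simp⟩
    refine Submodule.fg_of_fg_map_injective (LinearMap.mulLeft T c) hcl ?_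
    rw [Ideal.map_mulLeft_finsetInf_span_singleton hcl hs]
    have hbFG := (hR.2 (s.image b)).map (algebraMap R T)
    rw [Finset.inf_image, Ideal.map_finsetInf_of_flat] at hbFG
    simp only [Function.comp_apply, Ideal.map_span, Set.image_singleton] at hbFG
    exact hbFG
end

section
/- Let D_1, ..., D_r be integral domains and R = D_1 × ⋯ × D_r. Then R is quasi-coherent if and only if for every finitely generated ideal I of R, the R-module Hom_R(I, R) is finitely generated. -/
/-!
For a non-zero-divisor `a` in an ideal `I`, evaluation at `a` identifies `Hom(I, R)` with the
colon ideal `(a) : I`. In `R = ∏ Dᵢ` let `eₐ` be the idempotent supported on the zero set of `a`,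
so that `a + eₐ` is a non-zero-divisor and `(0 : a) = (eₐ)`. A finitely generated `I = (s)`
contains an `a` with the same support as `I`; then `I` is a direct summand of `(eₐ) + I`, which
contains `a + eₐ`. Multiplication by the non-zero-divisor `∏_{b ∈ t} (b + e_b)` maps a colon
ideal `(a) : (t)` isomorphically onto a finite intersection of principal ideals, which gives one
direction. Conversely, if all `b ∈ s` are non-zero-divisors and `c_b = ∏_{k ≠ b} k`, then
`⋂_b (b) = b₀ · ((c_{b₀}) : (c_b)_b)`, and replacing each `b` by `b + e_b` reduces the general
intersection to this case.
-/

open scoped nonZeroDivisors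

theorem Module.Finite.linearMap_of_leftInverse {R P Q M : Type*} [CommSemiring R]
    [AddCommMonoid P] [Module R P] [AddCommMonoid Q] [Module R Q] [AddCommMonoid M] [Module R M]
    (i : P →ₗ[R] Q) (π : Q →ₗ[R] P)
    (h : Function.LeftInverse π i) [Module.Finite R (Q →ₗ[R] M)] :
    Module.Finite R (P →ₗ[R] M) :=
  .of_surjective (LinearMap.lcomp R M i) fun ψ =>
    ⟨ψ ∘ₗ π, LinearMap.ext fun x => congrArg ψ (h x)⟩

namespace Ideal

variable {R : Type*} [CommRing R]

theorem coe_mul_map_comm {I : Ideal R} (φ : I →ₗ[R] R) (x y : I) :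
    (x : R) * φ y = y * φ x := by
  rw [← smul_eq_mul, ← map_smul, ← smul_eq_mul (y : R), ← map_smul]
  exact congrArg φ (Subtype.ext (mul_comm _ _))

theorem map_mem_colon {I : Ideal R} (φ : I →ₗ[R] R) (a : I) :
    φ a ∈ (span {(a : R)}).colon (I : Set R) :=
  Submodule.mem_colon.mpr fun x hx => mem_span_singleton'.mpr ⟨φ ⟨x, hx⟩, by
    rw [smul_eq_mul, mul_comm, mul_comm (φ a)]
    exact coe_mul_map_comm φ a ⟨x, hx⟩⟩

noncomputable def dualEquivColon {I : Ideal R} {a : R} (haI : a ∈ I) (ha : a ∈ R⁰) :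
    (I →ₗ[R] R) ≃ₗ[R] (span {a}).colon (I : Set R) :=
  LinearEquiv.ofBijective
    { toFun := fun φ => ⟨φ ⟨a, haI⟩, map_mem_colon φ ⟨a, haI⟩⟩
      map_add' := fun _ _ => rfl
      map_smul' := fun _ _ => rfl }
    ⟨fun φ ψ h => LinearMap.ext fun x => (mul_cancel_left_mem_nonZeroDivisors ha).mp <| by
      have h' : φ ⟨a, haI⟩ = ψ ⟨a, haI⟩ := congrArg Subtype.val h
      rw [coe_mul_map_comm φ ⟨a, haI⟩ x, coe_mul_map_comm ψ ⟨a, haI⟩ x, h'],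
    by
      rintro ⟨c, hc⟩
      have inj : Function.Injective (LinearMap.toSpanSingleton R R a) := fun _ _ h =>
        (mul_cancel_right_mem_nonZeroDivisors ha).mp h
      let e := LinearEquiv.ofInjective _ inj
      have hcI : ∀ x : I, c * x ∈ LinearMap.range (LinearMap.toSpanSingleton R R a) := fun x => by
        rw [← LinearMap.span_singleton_eq_range, ← smul_eq_mul]
        exact Submodule.mem_colon.mp hc x x.2
      refine ⟨e.symm.toLinearMap ∘ₗ
        (LinearMap.codRestrict _ (LinearMap.mulLeft R c ∘ₗ I.subtype) hcI), Subtype.ext ?_⟩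
      change e.symm _ = c
      refine e.symm_apply_eq.mpr (Subtype.ext ?_)
      exact (smul_eq_mul c a).symm⟩

theorem finite_dual_iff_fg_colon {I : Ideal R} {a : R} (haI : a ∈ I) (ha : a ∈ R⁰) :
    Module.Finite R (I →ₗ[R] R) ↔ ((span {a}).colon (I : Set R)).FG :=
  ⟨fun _ => Module.Finite.iff_fg.mp (.equiv (dualEquivColon haI ha)),
    fun h => have := Module.Finite.iff_fg.mpr h; .equiv (dualEquivColon haI ha).symm⟩

theorem finite_linearMap_of_finite_linearMap_span_sup {M : Type*} [AddCommMonoid M] [Module R M]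
    {I : Ideal R} {e : R} (he : IsIdempotentElem e) (heI : ∀ x ∈ I, e * x = 0)
    [Module.Finite R (↥(span {e} ⊔ I) →ₗ[R] M)] : Module.Finite R (I →ₗ[R] M) := by
  have hproj : ∀ x ∈ span {e} ⊔ I, (1 - e) * x ∈ I := by
    intro x hx
    obtain ⟨y, hy, z, hz, rfl⟩ := Submodule.mem_sup.mp hx
    obtain ⟨r, rfl⟩ := mem_span_singleton'.mp hy
    have : (1 - e) * (r * e + z) = z := by
      linear_combination (-r) * he.eq - heI z hz
    rwa [this]
  refine Module.Finite.linearMap_of_leftInverse (Submodule.inclusion le_sup_right)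
    ((LinearMap.mulLeft R (1 - e)).restrict hproj) fun x => Subtype.ext ?_
  change (1 - e) * x = x
  linear_combination - heI x x.2

theorem map_mulLeft_eq_span_singleton_inf {K L : Ideal R} {g : R}
    (h : ∀ x, x ∈ K ↔ g * x ∈ L) : Submodule.map (LinearMap.mulLeft R g) K = span {g} ⊓ L := by
  ext y
  simp only [Submodule.mem_map, LinearMap.mulLeft_apply, Submodule.mem_inf, mem_span_singleton]
  constructor
  · rintro ⟨x, hx, rfl⟩
    exact ⟨dvd_mul_right g x, (h x).mp hx⟩
  · rintro ⟨⟨x, rfl⟩, hy⟩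
    exact ⟨x, (h x).mpr hy, rfl⟩

theorem fg_finsetInf_span_singleton_of_mem_nonZeroDivisors
    (hdual : ∀ I : Ideal R, I.FG → Module.Finite R (I →ₗ[R] R)) {s : Finset R}
    (hs : ∀ b ∈ s, b ∈ R⁰) : (s.inf fun b => span {b}).FG := by
  classical
  obtain rfl | ⟨b₀, hb₀⟩ := s.eq_empty_or_nonempty
  · simpa using fg_top R
  let c : R → R := fun b => ∏ k ∈ s.erase b, k
  have hc : ∀ b ∈ s, c b ∈ R⁰ := fun b _ =>
    prod_mem_nonZeroDivisors_of_mem_nonZeroDivisors fun k hk => hs k (Finset.mem_of_mem_erase hk)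
  have hbc : ∀ b ∈ s, b * c b = ∏ k ∈ s, k := fun b hb => Finset.mul_prod_erase s (fun k => k) hb
  have hJ : c b₀ ∈ span (s.image c : Set R) :=
    subset_span (Finset.mem_coe.mpr (Finset.mem_image_of_mem c hb₀))
  have hcolon := (finite_dual_iff_fg_colon hJ (hc b₀ hb₀)).mp (hdual _ ⟨_, rfl⟩)
  have key : ∀ z, z ∈ (span {c b₀}).colon (span (s.image c : Set R) : Set R) ↔
      b₀ * z ∈ s.inf fun b => span {b} := by
    intro z
    simp only [colon_span, Submodule.mem_colon, Finset.coe_image, Set.forall_mem_image,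
      Finset.mem_coe, smul_eq_mul, mem_span_singleton, Submodule.mem_finsetInf]
    refine forall₂_congr fun b hb => ?_
    have hb₀z : b₀ * (z * c b) = c b * (b₀ * z) := by ring
    rw [← (isRegular_iff_mem_nonZeroDivisors.mpr (hs b₀ hb₀)).left.dvd_cancel_left, hbc b₀ hb₀,
      hb₀z, ← hbc b hb, mul_comm b,
      (isRegular_iff_mem_nonZeroDivisors.mpr (hc b hb)).left.dvd_cancel_left]
  rw [← inf_eq_right.mpr (Finset.inf_le (f := fun b : R => span {b}) hb₀),
    ← map_mulLeft_eq_span_singleton_inf key]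
  exact Submodule.FG.map _ hcolon

end Ideal

namespace Pi

variable {ι : Type*} {D : ι → Type*} [∀ i, CommRing (D i)]

theorem mem_span_singleton {a x : ∀ i, D i} : x ∈ Ideal.span {a} ↔ ∀ i, a i ∣ x i := by
  rw [Ideal.mem_span_singleton]
  exact ⟨fun ⟨c, hc⟩ i => ⟨c i, congrFun hc i⟩,
    fun h => ⟨fun i => (h i).choose, funext fun i => (h i).choose_spec⟩⟩

theorem mem_finsetInf_span_singleton {s : Finset (∀ i, D i)} {x : ∀ i, D i} :
    x ∈ s.inf (fun b => Ideal.span {b}) ↔ ∀ b ∈ s, ∀ i, b i ∣ x i := by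
  simp only [Submodule.mem_finsetInf, mem_span_singleton]

open Classical in
noncomputable def zeroIndicator (a : ∀ i, D i) : ∀ i, D i := fun i => if a i = 0 then 1 else 0

open Classical in
theorem zeroIndicator_apply (a : ∀ i, D i) (i : ι) :
    zeroIndicator a i = if a i = 0 then 1 else 0 := rfl

open Classical in
theorem add_zeroIndicator_apply (a : ∀ i, D i) (i : ι) :
    (a + zeroIndicator a) i = if a i = 0 then 1 else a i := by
  split_ifs with h <;> simp [zeroIndicator_apply, h]

theorem isIdempotentElem_zeroIndicator (a : ∀ i, D i) : IsIdempotentElem (zeroIndicator a) := by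
  funext i
  by_cases h : a i = 0 <;> simp [zeroIndicator_apply, h]

theorem zeroIndicator_mul_eq_zero {a b : ∀ i, D i} (h : ∀ i, a i = 0 → b i = 0) :
    zeroIndicator a * b = 0 := by
  funext i
  by_cases ha : a i = 0 <;> simp [zeroIndicator_apply, ha, h i]

theorem exists_mem_span_forall_eq_zero (s : Finset (∀ i, D i)) :
    ∃ a ∈ Ideal.span (s : Set (∀ i, D i)), ∀ b ∈ s, ∀ i, a i = 0 → b i = 0 := by
  classical
  induction s using Finset.induction_on with
  | empty => exact ⟨0, zero_mem _, by simp⟩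
  | insert b s _ ih =>
    obtain ⟨a, ha, has⟩ := ih
    rw [Finset.coe_insert]
    refine ⟨b + zeroIndicator b * a, add_mem (Ideal.subset_span (Set.mem_insert b _))
      (Ideal.mul_mem_left _ _ (Ideal.span_mono (Set.subset_insert b _) ha)), ?_⟩
    intro b' hb' i hi
    by_cases hb : b i = 0
    · simp only [Pi.add_apply, Pi.mul_apply, zeroIndicator_apply, hb, if_true, one_mul,
        zero_add] at hi
      rcases Finset.mem_insert.mp hb' with rfl | hb'
      exacts [hb, has b' hb' i hi]
    · simp [zeroIndicator_apply, hb] at hi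

variable [∀ i, IsDomain (D i)]

theorem mem_nonZeroDivisors_of_forall_ne_zero {a : ∀ i, D i} (ha : ∀ i, a i ≠ 0) :
    a ∈ (∀ i, D i)⁰ :=
  mem_nonZeroDivisors_iff_right.mpr fun _ hx =>
    funext fun i => (mul_eq_zero.mp (congrFun hx i)).resolve_right (ha i)

theorem add_zeroIndicator_ne_zero (a : ∀ i, D i) (i : ι) : (a + zeroIndicator a) i ≠ 0 := by
  rw [add_zeroIndicator_apply]
  split_ifs with h
  exacts [one_ne_zero, h]

theorem prod_add_zeroIndicator_ne_zero (s : Finset (∀ i, D i)) (i : ι) :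
    (∏ k ∈ s, (k + zeroIndicator k)) i ≠ 0 := by
  rw [Finset.prod_apply]
  exact Finset.prod_ne_zero_iff.mpr fun k _ => add_zeroIndicator_ne_zero k i

theorem colon_bot_span_singleton (a : ∀ i, D i) :
    (⊥ : Ideal (∀ i, D i)).colon (Ideal.span {a} : Set (∀ i, D i)) =
      Ideal.span {zeroIndicator a} := by
  ext x
  rw [Ideal.colon_span, Submodule.mem_colon_singleton, Submodule.mem_bot, smul_eq_mul,
    mem_span_singleton, funext_iff]
  refine forall_congr' fun i => ?_
  by_cases h : a i = 0 <;> simp [zeroIndicator_apply, h]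

theorem fg_colon_of_forall_fg_finsetInf
    (hinf : ∀ u : Finset (∀ i, D i), (u.inf fun b => Ideal.span {b}).FG)
    (a : ∀ i, D i) (t : Finset (∀ i, D i)) :
    ((Ideal.span {a}).colon (t : Set (∀ i, D i))).FG := by
  classical
  let c : (∀ i, D i) → ∀ i, D i := fun b => ∏ k ∈ t.erase b, (k + zeroIndicator k)
  -- `h b = a * G / b` on the support of `b`
  let h : (∀ i, D i) → ∀ i, D i := fun b i => if b i = 0 then 1 else a i * c b i
  let G := ∏ b ∈ t, (b + zeroIndicator b)
  have hc : ∀ b i, c b i ≠ 0 := fun b => prod_add_zeroIndicator_ne_zero (t.erase b)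
  have hG : ∀ b ∈ t, ∀ i, b i ≠ 0 → G i = b i * c b i := fun b hb i hbi => by
    change (∏ b ∈ t, (b + zeroIndicator b)) i = _
    rw [← Finset.mul_prod_erase t _ hb, Pi.mul_apply, add_zeroIndicator_apply, if_neg hbi]
  have key : ∀ x, x ∈ (Ideal.span {a}).colon (t : Set (∀ i, D i)) ↔
      G * x ∈ (t.image h).inf fun b => Ideal.span {b} := by
    intro x
    simp only [Submodule.mem_colon, Finset.mem_coe, smul_eq_mul, mem_span_singleton,
      mem_finsetInf_span_singleton, Finset.forall_mem_image]
    refine forall₂_congr fun b hb => forall_congr' fun i => ?_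
    by_cases hbi : b i = 0
    · simp [h, hbi]
    · simp only [h, if_neg hbi, Pi.mul_apply, hG b hb i hbi]
      rw [mul_right_comm, mul_comm (b i), mul_dvd_mul_iff_right (hc b i)]
  have hGreg : G ∈ (∀ i, D i)⁰ :=
    mem_nonZeroDivisors_of_forall_ne_zero (prod_add_zeroIndicator_ne_zero t)
  refine Submodule.fg_of_fg_map_injective (LinearMap.mulLeft _ G)
    (fun x y hxy => (mul_cancel_left_mem_nonZeroDivisors hGreg).mp hxy) ?_
  rw [Ideal.map_mulLeft_eq_span_singleton_inf key]
  have hGh := hinf (insert G (t.image h))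
  rw [Finset.inf_insert] at hGh
  exact hGh

theorem fg_finsetInf_of_forall_finite_dual
    (hdual : ∀ I : Ideal (∀ i, D i), I.FG →
      Module.Finite (∀ i, D i) (I →ₗ[∀ i, D i] (∀ i, D i)))
    (s : Finset (∀ i, D i)) : (s.inf fun b => Ideal.span {b}).FG := by
  classical
  let reg : (∀ i, D i) → ∀ i, D i := fun b => b + zeroIndicator b
  have hreg := Ideal.fg_finsetInf_span_singleton_of_mem_nonZeroDivisors hdual (s := s.image reg)
    (by simpa using fun b _ => mem_nonZeroDivisors_of_forall_ne_zero (add_zeroIndicator_ne_zero b))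
  let F : ∀ i, D i := fun i => if ∃ b ∈ s, b i = 0 then 0 else 1
  have hF : s.inf (fun b => Ideal.span {b}) =
      Submodule.map (LinearMap.mulLeft _ F) ((s.image reg).inf fun b => Ideal.span {b}) := by
    ext x
    simp only [Submodule.mem_map, mem_finsetInf_span_singleton, Finset.forall_mem_image,
      LinearMap.mulLeft_apply, reg, add_zeroIndicator_apply]
    constructor
    · intro hx
      refine ⟨x, fun b hb i => ?_, funext fun i => ?_⟩
      · split_ifs
        exacts [one_dvd _, hx b hb i]
      · by_cases h : ∃ b ∈ s, b i = 0
        · obtain ⟨b, hb, hbi⟩ := h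
          have hxi := hx b hb i
          rw [hbi, zero_dvd_iff] at hxi
          simp [hxi]
        · simp [F, h]
    · rintro ⟨y, hy, rfl⟩ b hb i
      by_cases hbi : b i = 0
      · rw [Pi.mul_apply, show F i = 0 from if_pos ⟨b, hb, hbi⟩, zero_mul]
        exact dvd_zero _
      · have hyi := hy hb i
        rw [if_neg hbi] at hyi
        exact hyi.mul_left _
  rw [hF]
  exact Submodule.FG.map _ hreg

theorem finite_dual_of_forall_fg_finsetInf
    (hinf : ∀ u : Finset (∀ i, D i), (u.inf fun b => Ideal.span {b}).FG)
    {I : Ideal (∀ i, D i)} (hI : I.FG) : Module.Finite (∀ i, D i) (I →ₗ[∀ i, D i] (∀ i, D i)) := by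
  classical
  obtain ⟨s, rfl⟩ := hI
  obtain ⟨a, has, ha⟩ := exists_mem_span_forall_eq_zero s
  set e := zeroIndicator a
  have heI : Ideal.span (s : Set (∀ i, D i)) ≤ LinearMap.ker (LinearMap.mulLeft _ e) :=
    Ideal.span_le.mpr fun b hb => zeroIndicator_mul_eq_zero (ha b hb)
  set J := Ideal.span {e} ⊔ Ideal.span (s : Set (∀ i, D i)) with hJ
  have hmem : a + e ∈ J :=
    add_mem (Ideal.mem_sup_right has) (Ideal.mem_sup_left (Ideal.mem_span_singleton_self e))
  have : Module.Finite (∀ i, D i) (J →ₗ[∀ i, D i] (∀ i, D i)) := by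
    rw [Ideal.finite_dual_iff_fg_colon hmem
      (mem_nonZeroDivisors_of_forall_ne_zero (add_zeroIndicator_ne_zero a)),
      hJ, ← Ideal.span_insert, Ideal.colon_span, ← Finset.coe_insert]
    exact fg_colon_of_forall_fg_finsetInf hinf _ _
  exact Ideal.finite_linearMap_of_finite_linearMap_span_sup (isIdempotentElem_zeroIndicator a)
    fun x hx => heI hx

end Pi

theorem stmt_18_general (ι : Type*) (D : ι → Type*)
    [∀ i, CommRing (D i)] [∀ i, IsDomain (D i)] :
    IsQuasiCoherentRing (∀ i, D i) ↔
      ∀ I : Ideal (∀ i, D i), I.FG →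
        Module.Finite (∀ i, D i) (I →ₗ[∀ i, D i] (∀ i, D i)) := by
  refine ⟨fun ⟨_, hinf⟩ _ hI => Pi.finite_dual_of_forall_fg_finsetInf hinf hI,
    fun hdual => ⟨fun a => ?_, Pi.fg_finsetInf_of_forall_finite_dual hdual⟩⟩
  rw [Pi.colon_bot_span_singleton]
  exact ⟨{Pi.zeroIndicator a}, by simp⟩

/-- a finite product `R = D₁ × ⋯ × Dᵣ` of integral domains is
quasi-coherent iff `Hom_R(I, R)` is finitely generated for every finitely
generated ideal `I` of `R`. -/
theorem stmt_18 (ι : Type*) [Fintype ι] (D : ι → Type*)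
    [∀ i, CommRing (D i)] [∀ i, IsDomain (D i)] :
    IsQuasiCoherentRing (∀ i, D i) ↔
      ∀ I : Ideal (∀ i, D i), I.FG →
        Module.Finite (∀ i, D i) (I →ₗ[∀ i, D i] (∀ i, D i)) :=
  stmt_18_general ι D
end

section
/- Let D_1, ..., D_r be integral domains and R = D_1 × ⋯ × D_r. Then R is quasi-coherent if and only if each D_i is quasi-coherent. -/
open Ideal Submodule

section aux
variable {ι : Type*} [Fintype ι] {D : ι → Type*} [∀ i, CommRing (D i)]

/-- The ideal of a finite product ring whose components are the given ideals. -/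
def piIdeal (J : ∀ i, Ideal (D i)) : Ideal (∀ i, D i) where
  carrier := {x | ∀ i, x i ∈ J i}
  add_mem' hx hy i := (J i).add_mem (hx i) (hy i)
  zero_mem' i := (J i).zero_mem
  smul_mem' c _ hx i := (J i).mul_mem_left (c i) (hx i)

lemma mem_piIdeal {J : ∀ i, Ideal (D i)} {x : ∀ i, D i} :
    x ∈ piIdeal J ↔ ∀ i, x i ∈ J i := Iff.rfl

lemma piIdeal_fg_of_fg {J : ∀ i, Ideal (D i)} (h : ∀ i, (J i).FG) : (piIdeal J).FG := by
  classical
  choose T hT using h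
  refine ⟨Finset.univ.biUnion fun i => (T i).image (Pi.single i), le_antisymm ?_ ?_⟩
  · rw [Ideal.span_le]
    intro x hx
    rw [Finset.coe_biUnion] at hx
    simp only [Set.mem_iUnion, Finset.coe_image, Set.mem_image, Finset.mem_coe,
      Finset.coe_univ, Set.mem_univ] at hx
    obtain ⟨i, -, t, ht, rfl⟩ := hx
    intro j
    by_cases hj : j = i
    · subst hj
      simpa using (hT j ▸ Ideal.subset_span ht : t ∈ J j)
    · simp [Pi.single_eq_of_ne hj]
  · intro x hx
    rw [show x = ∑ i, Pi.single i (x i) from (Finset.univ_sum_single x).symm]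
    refine Ideal.sum_mem _ fun i _ => ?_
    have hxi : x i ∈ Ideal.span (↑(T i) : Set (D i)) := (hT i) ▸ hx i
    refine Submodule.span_induction (p := fun y _ => Pi.single i y ∈
      Ideal.span (↑(Finset.univ.biUnion fun i => (T i).image (Pi.single i)) : Set (∀ i, D i)))
      ?_ ?_ ?_ ?_ hxi
    · intro y hy
      refine Ideal.subset_span ?_
      rw [Finset.coe_biUnion]
      simp only [Set.mem_iUnion, Finset.coe_image, Set.mem_image, Finset.mem_coe,
        Finset.coe_univ, Set.mem_univ]
      exact ⟨i, trivial, y, hy, rfl⟩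
    · simp
    · intro y z _ _ hy hz
      rw [Pi.single_add]
      exact Ideal.add_mem _ hy hz
    · intro c y _ hy
      rw [smul_eq_mul, Pi.single_mul]
      exact Ideal.mul_mem_left _ _ hy

lemma fg_of_piIdeal_fg {J : ∀ i, Ideal (D i)} (h : (piIdeal J).FG) (i : ι) : (J i).FG := by
  classical
  have hmap : (piIdeal J).map (Pi.evalRingHom D i) = J i := by
    apply le_antisymm
    · rw [Ideal.map_le_iff_le_comap]
      intro x hx
      exact hx i
    · intro b hb
      have : (Pi.single i b : ∀ i, D i) ∈ piIdeal J := by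
        intro j
        by_cases hj : j = i
        · subst hj; simpa using hb
        · simp [Pi.single_eq_of_ne hj]
      simpa using Ideal.mem_map_of_mem (Pi.evalRingHom D i) this
  exact hmap ▸ Ideal.FG.map h _

lemma mem_colon_bot {R : Type*} [CommRing R] {a x : R} :
    x ∈ Submodule.colon (⊥ : Ideal R) (Ideal.span {a}) ↔ x * a = 0 := by
  rw [Submodule.mem_colon]
  constructor
  · intro h
    simpa using h a (Ideal.subset_span rfl)
  · intro h p hp
    obtain ⟨c, rfl⟩ := Ideal.mem_span_singleton.mp hp
    simp only [smul_eq_mul, Submodule.mem_bot]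
    rw [← mul_assoc, h, zero_mul]

lemma domain_colon_fg {A : Type*} [CommRing A] [IsDomain A] (a : A) :
    (Submodule.colon (⊥ : Ideal A) (Ideal.span {a})).FG := by
  by_cases ha : a = 0
  · have : Submodule.colon (⊥ : Ideal A) (Ideal.span {a}) = ⊤ :=
      eq_top_iff.mpr fun x _ => mem_colon_bot.mpr (by simp [ha])
    exact this ▸ ⟨{1}, by simp⟩
  · have : Submodule.colon (⊥ : Ideal A) (Ideal.span {a}) = ⊥ := by
      refine le_antisymm (fun x hx => ?_) bot_le
      rcases mul_eq_zero.mp (mem_colon_bot.mp hx) with h | h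
      · simp [h]
      · exact absurd h ha
    rw [this]
    exact ⟨∅, by simp⟩

lemma colon_piIdeal (a : ∀ i, D i) :
    Submodule.colon (⊥ : Ideal (∀ i, D i)) (Ideal.span {a})
      = piIdeal fun i => Submodule.colon (⊥ : Ideal (D i)) (Ideal.span {a i}) := by
  ext x
  rw [mem_colon_bot, mem_piIdeal]
  simp only [mem_colon_bot]
  exact ⟨fun h i => congrFun h i, funext⟩

lemma inf_span_piIdeal (s : Finset (∀ i, D i)) :
    (s.inf fun a => (Ideal.span {a} : Ideal (∀ i, D i)))
      = piIdeal fun i => s.inf fun a => (Ideal.span {a i} : Ideal (D i)) := by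
  ext x
  rw [mem_piIdeal]
  simp only [Submodule.mem_finsetInf, Ideal.mem_span_singleton, pi_dvd_iff]
  exact ⟨fun h i a ha => h a ha i, fun h a ha i => h i a ha⟩

end aux

/-- a finite product `R = D₁ × ⋯ × Dᵣ` of integral domains is
quasi-coherent iff each `Dᵢ` is quasi-coherent. -/
theorem stmt_19 (ι : Type*) [Fintype ι] (D : ι → Type*)
    [∀ i, CommRing (D i)] [∀ i, IsDomain (D i)] :
    IsQuasiCoherentRing (∀ i, D i) ↔ ∀ i, IsQuasiCoherentRing (D i) := by
  classical
  constructor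
  · rintro ⟨-, h2⟩ i
    refine ⟨fun a => domain_colon_fg a, fun s => ?_⟩
    have hfg := fg_of_piIdeal_fg ((inf_span_piIdeal (s.image (Pi.single i))) ▸
      h2 (s.image (Pi.single i))) i
    rw [Finset.inf_image,
      show ((fun a => (Ideal.span {a i} : Ideal (D i))) ∘ Pi.single i) = fun b => Ideal.span {b}
        from funext fun b => by simp] at hfg
    exact hfg
  · intro h
    refine ⟨fun a => ?_, fun s => ?_⟩
    · rw [colon_piIdeal]
      exact piIdeal_fg_of_fg fun i => domain_colon_fg _
    · rw [inf_span_piIdeal]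
      refine piIdeal_fg_of_fg fun i => ?_
      have := (h i).2 (s.image fun a => a i)
      rwa [Finset.inf_image] at this
end
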